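/- arXiv:1805.08385 — 5 statements merged into one kernel-verified Lean document; each statement's English description precedes it below -/
import Mathlib

section
/- Mixing lemma: Let V and U_1, ..., U_N be d×d unitary matrices over ℂ, and let p_1, ..., p_N be nonnegative reals with Σ_j p_j = 1. Suppose (i) ‖U_j − V‖ ≤ a for every j, and (ii) ‖(Σ_j p_j U_j) − V‖ ≤ b, where ‖·‖ denotes the spectral norm. Then for every d²×d² complex matrix Y with trace norm ‖Y‖₁ ≤ 1, one has ‖Σ_j p_j (U_j ⊗ I_d) Y (U_j ⊗ I_d)† − (V ⊗ I_d) Y (V ⊗ I_d)†‖₁ ≤ a² + 2b. (This is the statement that the diamond-norm distance between the mixed-unitary channel ρ ↦ Σ_j p_j U_j ρ U_j† and the unitary channel ρ ↦ V ρ V† is at most a² + 2b, with the diamond norm written out explicitly.) -/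
open scoped Matrix.Norms.L2Operator Kronecker ComplexOrder
open Matrix

/-- The positive semidefinite square root of a positive semidefinite matrix
(removed from Mathlib; restored with its former definition). -/
noncomputable def Matrix.PosSemidef.sqrt {n : Type*} [Fintype n] [DecidableEq n]
    {𝕜 : Type*} [RCLike 𝕜] {A : Matrix n n 𝕜} (hA : A.PosSemidef) : Matrix n n 𝕜 :=
  hA.1.eigenvectorUnitary.1 * diagonal ((↑) ∘ (√·) ∘ hA.1.eigenvalues) *
  (star hA.1.eigenvectorUnitary : Matrix n n 𝕜)

lemma Matrix.PosSemidef.posSemidef_sqrt {n : Type*} [Fintype n] [DecidableEq n]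
    {𝕜 : Type*} [RCLike 𝕜] {A : Matrix n n 𝕜} (hA : A.PosSemidef) : hA.sqrt.PosSemidef := by
  unfold Matrix.PosSemidef.sqrt
  rw [Matrix.star_eq_conjTranspose]
  apply Matrix.PosSemidef.mul_mul_conjTranspose_same
  refine posSemidef_diagonal_iff.mpr fun i => ?_
  simp only [Function.comp_apply]
  exact RCLike.ofReal_nonneg.mpr (Real.sqrt_nonneg _)

lemma Matrix.PosSemidef.sqrt_mul_self {n : Type*} [Fintype n] [DecidableEq n]
    {𝕜 : Type*} [RCLike 𝕜] {A : Matrix n n 𝕜} (hA : A.PosSemidef) : hA.sqrt * hA.sqrt = A := by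
  set C : Matrix n n 𝕜 := hA.1.eigenvectorUnitary.1 with hCdef
  set E : Matrix n n 𝕜 := diagonal ((↑) ∘ (√·) ∘ hA.1.eigenvalues) with hEdef
  have hC : star C * C = 1 := Matrix.mem_unitaryGroup_iff'.mp hA.1.eigenvectorUnitary.2
  have hEE : E * E = diagonal (RCLike.ofReal ∘ hA.1.eigenvalues) := by
    rw [hEdef, diagonal_mul_diagonal]
    congr 1
    funext v
    simp only [Function.comp_apply]
    rw [← RCLike.ofReal_mul, Real.mul_self_sqrt (hA.eigenvalues_nonneg v)]
  calc hA.sqrt * hA.sqrt = C * (E * (star C * C) * E) * star C := by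
        simp only [Matrix.PosSemidef.sqrt, hCdef, hEdef, Matrix.mul_assoc]
    _ = A := by
        rw [hC, Matrix.mul_one, hEE]
        conv_rhs => rw [hA.1.spectral_theorem, Unitary.conjStarAlgAut_apply]

/-- The trace norm (Schatten 1-norm) of a complex matrix: the trace of `√(AᴴA)`. -/
noncomputable def traceNorm {n : Type*} [Fintype n] [DecidableEq n] (A : Matrix n n ℂ) : ℝ :=
  ((Matrix.posSemidef_conjTranspose_mul_self A).sqrt.trace).re

variable {n : Type*} [Fintype n] [DecidableEq n]




lemma opNorm_le_of_mulVec (A : Matrix n n ℂ) {c : ℝ} (hc : 0 ≤ c)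
    (h : ∀ x : EuclideanSpace ℂ n, ‖(EuclideanSpace.equiv n ℂ).symm (A *ᵥ x)‖ ≤ c * ‖x‖) :
    ‖A‖ ≤ c := by
  rw [Matrix.l2_opNorm_def]
  exact ContinuousLinearMap.opNorm_le_bound _ hc h

lemma norm_one_le : ‖(1 : Matrix n n ℂ)‖ ≤ 1 := by
  have h := Matrix.l2_opNorm_conjTranspose_mul_self (1 : Matrix n n ℂ)
  simp only [Matrix.conjTranspose_one, one_mul] at h
  nlinarith [norm_nonneg (1 : Matrix n n ℂ)]

lemma norm_unitary_le {W : Matrix n n ℂ} (hW : W ∈ Matrix.unitaryGroup n ℂ) : ‖W‖ ≤ 1 := by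
  have h := Matrix.l2_opNorm_conjTranspose_mul_self W
  rw [← Matrix.star_eq_conjTranspose, (Matrix.mem_unitaryGroup_iff').mp hW] at h
  nlinarith [norm_nonneg W, norm_one_le (n := n)]
lemma norm_diagonal_le {v : n → ℂ} (hv : ∀ i, ‖v i‖ ≤ 1) : ‖diagonal v‖ ≤ 1 := by
  refine opNorm_le_of_mulVec _ zero_le_one fun x => ?_
  rw [one_mul]
  rw [EuclideanSpace.norm_eq, EuclideanSpace.norm_eq]
  apply Real.sqrt_le_sqrt
  apply Finset.sum_le_sum
  intro i _
  have h0 : (EuclideanSpace.equiv n ℂ).symm (diagonal v *ᵥ x) i = v i * x i :=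
    Matrix.mulVec_diagonal v x i
  rw [h0]
  have h1 : ‖v i * x i‖ ≤ ‖x i‖ := by
    rw [norm_mul]
    calc ‖v i‖ * ‖x i‖ ≤ 1 * ‖x i‖ :=
          mul_le_mul_of_nonneg_right (hv i) (norm_nonneg _)
      _ = ‖x i‖ := one_mul _
  exact pow_le_pow_left₀ (norm_nonneg _) h1 2
lemma sq_norm_mulVec (A : Matrix n n ℂ) (y : n → ℂ) :
    ∑ i, ‖(A *ᵥ y) i‖ ^ 2 ≤ ‖A‖ ^ 2 * ∑ i, ‖y i‖ ^ 2 := by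
  have h := Matrix.l2_opNorm_mulVec A ((EuclideanSpace.equiv n ℂ).symm y)
  rw [EuclideanSpace.norm_eq, EuclideanSpace.norm_eq] at h
  have h2 : √(∑ i, ‖(A *ᵥ y) i‖ ^ 2) ≤ ‖A‖ * √(∑ i, ‖y i‖ ^ 2) := h
  have h3 : (0:ℝ) ≤ ∑ i, ‖(A *ᵥ y) i‖ ^ 2 := Finset.sum_nonneg fun _ _ => sq_nonneg _
  have h4 : (0:ℝ) ≤ ∑ i, ‖y i‖ ^ 2 := Finset.sum_nonneg fun _ _ => sq_nonneg _
  nlinarith [Real.sq_sqrt h3, Real.sq_sqrt h4, Real.sqrt_nonneg (∑ i, ‖y i‖ ^ 2),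
    Real.sqrt_nonneg (∑ i, ‖(A *ᵥ y) i‖ ^ 2), norm_nonneg A]

lemma norm_kron_one_le (A : Matrix n n ℂ) :
    ‖A ⊗ₖ (1 : Matrix n n ℂ)‖ ≤ ‖A‖ := by
  refine opNorm_le_of_mulVec _ (norm_nonneg A) fun x => ?_
  rw [EuclideanSpace.norm_eq, EuclideanSpace.norm_eq]
  rw [show ‖A‖ = √(‖A‖^2) from (Real.sqrt_sq (norm_nonneg A)).symm, ← Real.sqrt_mul (sq_nonneg _)]
  apply Real.sqrt_le_sqrt
  have key : ∀ q : n × n, ((A ⊗ₖ (1 : Matrix n n ℂ)) *ᵥ x) q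
      = (A *ᵥ (fun k => x (k, q.2))) q.1 := by
    rintro ⟨i, j⟩
    simp only [Matrix.mulVec, dotProduct, Matrix.kroneckerMap_apply, Fintype.sum_prod_type]
    rw [Finset.sum_comm]
    simp [Matrix.one_apply, Finset.sum_ite_eq', mul_comm]
  calc ∑ q : n × n, ‖(EuclideanSpace.equiv (n × n) ℂ).symm ((A ⊗ₖ (1 : Matrix n n ℂ)) *ᵥ x) q‖ ^ 2
      = ∑ i : n, ∑ j : n, ‖(A *ᵥ (fun k => x (k, j))) i‖ ^ 2 := by
        rw [Fintype.sum_prod_type]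
        exact Finset.sum_congr rfl fun i _ => Finset.sum_congr rfl fun j _ => by
          rw [show (EuclideanSpace.equiv (n × n) ℂ).symm ((A ⊗ₖ (1 : Matrix n n ℂ)) *ᵥ x) (i, j) = (A *ᵥ (fun k => x (k, j))) i from key (i, j)]
    _ = ∑ j : n, ∑ i : n, ‖(A *ᵥ (fun k => x (k, j))) i‖ ^ 2 := Finset.sum_comm
    _ ≤ ∑ j : n, ‖A‖ ^ 2 * ∑ i : n, ‖x (i, j)‖ ^ 2 := by
        exact Finset.sum_le_sum fun j _ => sq_norm_mulVec A _
    _ = ‖A‖ ^ 2 * ∑ q : n × n, ‖x q‖ ^ 2 := by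
        rw [← Finset.mul_sum, Fintype.sum_prod_type]
        rw [Finset.sum_comm]






lemma trace_conj_basis (W M : Matrix n n ℂ) (hW : W ∈ Matrix.unitaryGroup n ℂ) :
    M.trace = ∑ i, dotProduct (star (fun k => W k i)) (M *ᵥ (fun k => W k i)) := by
  have h1 : (star W * M * W).trace = M.trace := by
    rw [Matrix.trace_mul_comm, ← Matrix.mul_assoc, Matrix.mem_unitaryGroup_iff.mp hW,
      Matrix.one_mul]
  rw [← h1, Matrix.trace]
  refine Finset.sum_congr rfl fun i _ => ?_
  simp only [Matrix.diag_apply, Matrix.mul_apply, Matrix.mulVec, dotProduct,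
    Matrix.star_apply, Pi.star_apply, Finset.sum_mul, Finset.mul_sum, mul_assoc]

lemma traceNorm_eq_sum_eigenvalues (A : Matrix n n ℂ) :
    traceNorm A =
      ∑ i, ((Matrix.posSemidef_conjTranspose_mul_self A).posSemidef_sqrt.1.eigenvalues i) := by
  set hH := Matrix.posSemidef_conjTranspose_mul_self A
  set P := hH.sqrt with hPdef
  have hPh : P.IsHermitian := hH.posSemidef_sqrt.1
  have h1 : P.trace = (diagonal (RCLike.ofReal ∘ hPh.eigenvalues) : Matrix n n ℂ).trace := by
    conv_lhs => rw [hPh.spectral_theorem, Unitary.conjStarAlgAut_apply]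
    rw [Matrix.trace_mul_comm, ← Matrix.mul_assoc,
      Matrix.mem_unitaryGroup_iff'.mp (hPh.eigenvectorUnitary).2, Matrix.one_mul]
  have h2 : traceNorm A = P.trace.re := rfl
  rw [h2, h1, Matrix.trace_diagonal]
  simp

lemma inner_piLp_equiv_symm' (x y : n → ℂ) :
    inner ℂ ((WithLp.equiv 2 (n → ℂ)).symm x) ((WithLp.equiv 2 (n → ℂ)).symm y)
      = dotProduct (star x) y :=
  dotProduct_comm _ _

lemma norm_mulVec_eigen (A : Matrix n n ℂ) (i : n) :
    ‖(EuclideanSpace.equiv n ℂ).symm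
        (A *ᵥ ⇑((Matrix.posSemidef_conjTranspose_mul_self A).posSemidef_sqrt.1.eigenvectorBasis i))‖
      = (Matrix.posSemidef_conjTranspose_mul_self A).posSemidef_sqrt.1.eigenvalues i := by
  set hH := Matrix.posSemidef_conjTranspose_mul_self A
  set hPh := hH.posSemidef_sqrt.1 with hPhdef
  set b := hPh.eigenvectorBasis i with hbdef
  set μ := hPh.eigenvalues i with hμdef
  have hμ0 : 0 ≤ μ := hH.posSemidef_sqrt.eigenvalues_nonneg i
  have hvnorm : ‖b‖ = 1 := hPh.eigenvectorBasis.orthonormal.1 i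
  set v : n → ℂ := ⇑b with hvdef
  have hdd : dotProduct (star (A *ᵥ v)) (A *ᵥ v)
      = dotProduct (star v) ((Aᴴ * A) *ᵥ v) := by
    rw [Matrix.star_mulVec, ← dotProduct_mulVec, Matrix.mulVec_mulVec]
  have heig : (Aᴴ * A) *ᵥ v = μ • (μ • v) := by
    rw [← hH.sqrt_mul_self, ← Matrix.mulVec_mulVec, hvdef, hbdef,
      hPh.mulVec_eigenvectorBasis, ← hμdef, Matrix.mulVec_smul, hPh.mulVec_eigenvectorBasis]
  have hvv : dotProduct (star v) v = 1 := by
    have h1 : (inner ℂ b b : ℂ) = dotProduct (star v) v :=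
      (EuclideanSpace.inner_eq_star_dotProduct b b).trans (dotProduct_comm _ _)
    rw [← h1, inner_self_eq_norm_sq_to_K, hvnorm]
    norm_num
  have hinner : (inner ℂ ((EuclideanSpace.equiv n ℂ).symm (A *ᵥ v))
      ((EuclideanSpace.equiv n ℂ).symm (A *ᵥ v)) : ℂ) = (μ : ℂ) ^ 2 := by
    rw [show ((EuclideanSpace.equiv n ℂ).symm (A *ᵥ v) : EuclideanSpace ℂ n)
        = (WithLp.equiv 2 (n → ℂ)).symm (A *ᵥ v) from rfl]
    rw [inner_piLp_equiv_symm', hdd, heig, dotProduct_smul,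
      dotProduct_smul, hvv]
    rw [Complex.real_smul, Complex.real_smul]
    ring
  have hsq : ‖(EuclideanSpace.equiv n ℂ).symm (A *ᵥ v)‖ ^ 2 = μ ^ 2 := by
    have := inner_self_eq_norm_sq_to_K (𝕜 := ℂ) ((EuclideanSpace.equiv n ℂ).symm (A *ᵥ v))
    rw [hinner] at this
    exact_mod_cast congrArg Complex.re this.symm
  nlinarith [norm_nonneg ((EuclideanSpace.equiv n ℂ).symm (A *ᵥ v)), hμ0]

lemma abs_trace_mul_le (C A : Matrix n n ℂ) :
    ‖(C * A).trace‖ ≤ ‖C‖ * traceNorm A := by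
  set hH := Matrix.posSemidef_conjTranspose_mul_self A
  set hPh := hH.posSemidef_sqrt.1 with hPhdef
  set W : Matrix n n ℂ := (hPh.eigenvectorUnitary : Matrix n n ℂ) with hWdef
  have hWmem : W ∈ Matrix.unitaryGroup n ℂ := hPh.eigenvectorUnitary.2
  have hcol : ∀ i : n, (fun k => W k i) = ⇑(hPh.eigenvectorBasis i) := by
    intro i; funext k; simp [hWdef]
  rw [trace_conj_basis W ((C : Matrix n n ℂ) * A) hWmem]
  have hterm : ∀ i : n, ‖
      dotProduct (star (fun k => W k i)) ((C * A) *ᵥ (fun k => W k i))‖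
      ≤ ‖C‖ * hPh.eigenvalues i := by
    intro i
    rw [hcol i, ← Matrix.mulVec_mulVec]
    set v : n → ℂ := ⇑(hPh.eigenvectorBasis i) with hv
    have h1 : dotProduct (star v) (C *ᵥ (A *ᵥ v))
        = inner ℂ ((WithLp.equiv 2 (n → ℂ)).symm v)
            ((WithLp.equiv 2 (n → ℂ)).symm (C *ᵥ (A *ᵥ v))) :=
      (inner_piLp_equiv_symm' v (C *ᵥ (A *ᵥ v))).symm
    rw [h1]
    calc ‖(inner ℂ ((WithLp.equiv 2 (n → ℂ)).symm v)
            ((WithLp.equiv 2 (n → ℂ)).symm (C *ᵥ (A *ᵥ v))) : ℂ)‖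
        ≤ ‖(WithLp.equiv 2 (n → ℂ)).symm v‖ * ‖(WithLp.equiv 2 (n → ℂ)).symm (C *ᵥ (A *ᵥ v))‖ :=
          norm_inner_le_norm _ _
      _ ≤ ‖C‖ * hPh.eigenvalues i := by
          have hn1 : ‖(WithLp.equiv 2 (n → ℂ)).symm v‖ = 1 := by
            rw [show ((WithLp.equiv 2 (n → ℂ)).symm v : EuclideanSpace ℂ n)
                = hPh.eigenvectorBasis i from rfl]
            exact hPh.eigenvectorBasis.orthonormal.1 i
          have hn2 : ‖(WithLp.equiv 2 (n → ℂ)).symm (C *ᵥ (A *ᵥ v))‖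
              ≤ ‖C‖ * ‖(EuclideanSpace.equiv n ℂ).symm (A *ᵥ v)‖ :=
            Matrix.l2_opNorm_mulVec C ((EuclideanSpace.equiv n ℂ).symm (A *ᵥ v))
          rw [hn1, one_mul]
          calc ‖(WithLp.equiv 2 (n → ℂ)).symm (C *ᵥ (A *ᵥ v))‖
              ≤ ‖C‖ * ‖(EuclideanSpace.equiv n ℂ).symm (A *ᵥ v)‖ := hn2
            _ = ‖C‖ * hPh.eigenvalues i := by rw [norm_mulVec_eigen A i]
  calc ‖∑ i, dotProduct (star (fun k => W k i)) ((C * A) *ᵥ (fun k => W k i))‖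
      ≤ ∑ i, ‖dotProduct (star (fun k => W k i)) ((C * A) *ᵥ (fun k => W k i))‖ :=
        norm_sum_le _ _
    _ ≤ ∑ i, ‖C‖ * hPh.eigenvalues i := Finset.sum_le_sum fun i _ => hterm i
    _ = ‖C‖ * traceNorm A := by rw [← Finset.mul_sum, traceNorm_eq_sum_eigenvalues A]

lemma exists_dual_matrix (A : Matrix n n ℂ) :
    ∃ W : Matrix n n ℂ, ‖W‖ ≤ 1 ∧ ((W * A).trace).re = traceNorm A := by
  set hH := Matrix.posSemidef_conjTranspose_mul_self A
  set P := hH.sqrt with hPdef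
  have hPP : P * P = Aᴴ * A := hH.sqrt_mul_self
  set hPh := hH.posSemidef_sqrt.1 with hPhdef
  set μ := hPh.eigenvalues with hμdef
  have hμ0 : ∀ i, 0 ≤ μ i := hH.posSemidef_sqrt.eigenvalues_nonneg
  set Wm : Matrix n n ℂ := (hPh.eigenvectorUnitary : Matrix n n ℂ) with hWm
  have hWmem : Wm ∈ Matrix.unitaryGroup n ℂ := hPh.eigenvectorUnitary.2
  have hu2 : star Wm * Wm = 1 := Matrix.mem_unitaryGroup_iff'.mp hWmem
  have c1 : ∀ X : Matrix n n ℂ, star Wm * (Wm * X) = X := fun X => by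
    rw [← Matrix.mul_assoc, hu2, Matrix.one_mul]
  set ν : n → ℝ := fun i => if μ i = 0 then 0 else (μ i)⁻¹ with hν
  set Nd : Matrix n n ℂ := diagonal (fun i => (ν i : ℂ)) with hNd
  set D : Matrix n n ℂ := diagonal (RCLike.ofReal ∘ μ) with hD
  have hspec : P = Wm * D * star Wm := hPh.spectral_theorem
  have hAA : Aᴴ * A = Wm * (D * (D * star Wm)) := by
    rw [← hPP, hspec]
    simp only [Matrix.mul_assoc]
    rw [c1]
  refine ⟨Wm * Nd * star Wm * Aᴴ, ?_, ?_⟩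
  · -- norm bound
    set W0 : Matrix n n ℂ := Wm * Nd * star Wm * Aᴴ with hW0
    have hNdstar : star Nd = Nd := by
      rw [hNd, Matrix.star_eq_conjTranspose, Matrix.diagonal_conjTranspose]
      exact congrArg diagonal (funext fun i => by simp)
    have hsW0 : star W0 = A * (Wm * (Nd * star Wm)) := by
      rw [hW0]
      simp only [StarMul.star_mul, star_star]
      rw [hNdstar]
      rw [show star (Aᴴ) = A from by rw [← Matrix.star_eq_conjTranspose, star_star]]
      try simp only [Matrix.mul_assoc]
    have hprod : W0 * star W0 = Wm * ((Nd * (D * (D * Nd))) * star Wm) := by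
      rw [hsW0, hW0]
      simp only [Matrix.mul_assoc]
      rw [show Aᴴ * (A * (Wm * (Nd * star Wm))) = (Aᴴ * A) * (Wm * (Nd * star Wm)) from
        (Matrix.mul_assoc _ _ _).symm, hAA]
      simp only [Matrix.mul_assoc]
      rw [c1, c1]
    have hdiag : Nd * (D * (D * Nd)) = diagonal (fun i => ((ν i * (μ i * (μ i * ν i)) : ℝ) : ℂ)) := by
      rw [hNd, hD]
      simp only [Matrix.diagonal_mul_diagonal]
      exact congrArg diagonal (funext fun i => by
        simp only [Pi.mul_apply, Function.comp_apply]
        push_cast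
        try ring
        try rfl)
    have hεle : ∀ i, ‖((ν i * (μ i * (μ i * ν i)) : ℝ) : ℂ)‖ ≤ 1 := by
      intro i
      rw [Complex.norm_real]
      by_cases h : μ i = 0
      · simp [hν, h]
      · have hh : ν i = (μ i)⁻¹ := by simp [hν, h]
        rw [hh, show (μ i)⁻¹ * (μ i * (μ i * (μ i)⁻¹)) = 1 from by field_simp]
        norm_num
    have hnormprod : ‖W0 * star W0‖ ≤ 1 := by
      rw [hprod, hdiag]
      set E : Matrix n n ℂ := diagonal (fun i => ((ν i * (μ i * (μ i * ν i)) : ℝ) : ℂ)) with hE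
      have h1 : ‖Wm‖ ≤ 1 := norm_unitary_le hWmem
      have h2 : ‖star Wm‖ ≤ 1 := by
        rw [Matrix.star_eq_conjTranspose, Matrix.l2_opNorm_conjTranspose]
        exact h1
      have h3 : ‖E‖ ≤ 1 := norm_diagonal_le hεle
      have h5 : (0:ℝ) ≤ ‖star Wm‖ := norm_nonneg _
      have h6 : (0:ℝ) ≤ ‖E‖ := norm_nonneg _
      calc ‖Wm * (E * star Wm)‖ ≤ ‖Wm‖ * ‖E * star Wm‖ := Matrix.l2_opNorm_mul _ _
        _ ≤ 1 * ‖E * star Wm‖ :=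
            mul_le_mul_of_nonneg_right h1 (norm_nonneg _)
        _ = ‖E * star Wm‖ := one_mul _
        _ ≤ ‖E‖ * ‖star Wm‖ := Matrix.l2_opNorm_mul _ _
        _ ≤ 1 * 1 := mul_le_mul h3 h2 h5 zero_le_one
        _ = 1 := one_mul _
    have hsq : ‖W0 * star W0‖ = ‖W0‖ * ‖W0‖ := by
      have h := Matrix.l2_opNorm_conjTranspose_mul_self (star W0)
      rw [show (star W0)ᴴ = W0 from by
        rw [← Matrix.star_eq_conjTranspose, star_star]] at h
      rw [h, Matrix.star_eq_conjTranspose, Matrix.l2_opNorm_conjTranspose]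
    rw [hsq] at hnormprod
    nlinarith [norm_nonneg W0]
  · -- trace value
    have htr : (Wm * Nd * star Wm * Aᴴ) * A = Wm * (Nd * (D * (D * star Wm))) := by
      simp only [Matrix.mul_assoc]
      rw [show star Wm * (Aᴴ * A) = star Wm * (Wm * (D * (D * star Wm))) from by rw [hAA]]
      rw [c1]
    rw [htr, Matrix.trace_mul_comm]
    rw [show Nd * (D * (D * star Wm)) * Wm = Nd * (D * (D * (star Wm * Wm))) from by
      simp only [Matrix.mul_assoc], hu2, Matrix.mul_one]
    have hdiag2 : Nd * (D * D) = diagonal (fun i => ((μ i : ℝ) : ℂ)) := by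
      rw [hNd, hD]
      simp only [Matrix.diagonal_mul_diagonal]
      refine congrArg diagonal (funext fun i => ?_)
      simp only [Pi.mul_apply, Function.comp_apply]
      by_cases h : μ i = 0
      · simp [hν, h]
      · have hh : ν i = (μ i)⁻¹ := by simp [hν, h]
        rw [hh]
        push_cast
        field_simp
        rfl
    rw [hdiag2, Matrix.trace_diagonal]
    rw [traceNorm_eq_sum_eigenvalues A]
    rw [Complex.re_sum]
    exact Finset.sum_congr rfl fun i _ => by simp [hμdef]

lemma traceNorm_nonneg' (A : Matrix n n ℂ) : 0 ≤ traceNorm A := by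
  rw [traceNorm_eq_sum_eigenvalues]
  exact Finset.sum_nonneg fun i _ =>
    (Matrix.posSemidef_conjTranspose_mul_self A).posSemidef_sqrt.eigenvalues_nonneg i

lemma re_trace_le (W A : Matrix n n ℂ) (hW : ‖W‖ ≤ 1) : ((W * A).trace).re ≤ traceNorm A :=
  calc ((W * A).trace).re ≤ ‖(W * A).trace‖ := Complex.re_le_norm _
    _ ≤ ‖W‖ * traceNorm A := abs_trace_mul_le W A
    _ ≤ 1 * traceNorm A := mul_le_mul_of_nonneg_right hW (traceNorm_nonneg' A)
    _ = traceNorm A := one_mul _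

lemma traceNorm_triangle' (A B : Matrix n n ℂ) :
    traceNorm (A + B) ≤ traceNorm A + traceNorm B := by
  obtain ⟨W, hW, hWt⟩ := exists_dual_matrix (A + B)
  rw [← hWt, Matrix.mul_add, Matrix.trace_add, Complex.add_re]
  exact add_le_add (re_trace_le W A hW) (re_trace_le W B hW)

lemma traceNorm_zero' : traceNorm (0 : Matrix n n ℂ) = 0 := by
  obtain ⟨W, _, hWt⟩ := exists_dual_matrix (0 : Matrix n n ℂ)
  rw [← hWt, Matrix.mul_zero, Matrix.trace_zero]
  simp

lemma traceNorm_smul_le (c : ℝ) (hc : 0 ≤ c) (A : Matrix n n ℂ) :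
    traceNorm ((c : ℂ) • A) ≤ c * traceNorm A := by
  obtain ⟨W, hW, hWt⟩ := exists_dual_matrix ((c : ℂ) • A)
  rw [← hWt, Matrix.mul_smul, Matrix.trace_smul, smul_eq_mul]
  rw [show ((c : ℂ) * (W * A).trace).re = c * ((W * A).trace).re from by
    simp [Complex.mul_re]]
  exact mul_le_mul_of_nonneg_left (re_trace_le W A hW) hc

lemma traceNorm_mul_mul_le (B Y C : Matrix n n ℂ) :
    traceNorm (B * Y * C) ≤ ‖B‖ * ‖C‖ * traceNorm Y := by
  obtain ⟨W, hW, hWt⟩ := exists_dual_matrix (B * Y * C)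
  rw [← hWt]
  have h0 : (W * (B * Y * C)).trace = ((C * W * B) * Y).trace := by
    rw [show W * (B * Y * C) = (W * B * Y) * C from by simp only [Matrix.mul_assoc],
      Matrix.trace_mul_comm]
    simp only [Matrix.mul_assoc]
  rw [h0]
  have hCWB : ‖C * W * B‖ ≤ ‖B‖ * ‖C‖ := by
    calc ‖C * W * B‖ ≤ ‖C * W‖ * ‖B‖ := Matrix.l2_opNorm_mul _ _
      _ ≤ (‖C‖ * ‖W‖) * ‖B‖ :=
          mul_le_mul_of_nonneg_right (Matrix.l2_opNorm_mul _ _) (norm_nonneg _)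
      _ ≤ (‖C‖ * 1) * ‖B‖ := by
          have := mul_le_mul_of_nonneg_left hW (norm_nonneg C)
          exact mul_le_mul_of_nonneg_right this (norm_nonneg _)
      _ = ‖B‖ * ‖C‖ := by ring
  calc (((C * W * B) * Y).trace).re ≤ ‖((C * W * B) * Y).trace‖ :=
        Complex.re_le_norm _
    _ ≤ ‖C * W * B‖ * traceNorm Y := abs_trace_mul_le _ _
    _ ≤ (‖B‖ * ‖C‖) * traceNorm Y :=
        mul_le_mul_of_nonneg_right hCWB (traceNorm_nonneg' Y)

lemma traceNorm_sum_le' {ι : Type*} (s : Finset ι) (f : ι → Matrix n n ℂ) :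
    traceNorm (∑ i ∈ s, f i) ≤ ∑ i ∈ s, traceNorm (f i) := by
  classical
  induction s using Finset.induction_on with
  | empty => simp [traceNorm_zero']
  | insert _ _ hx ih =>
    rw [Finset.sum_insert hx, Finset.sum_insert hx]
    exact le_trans (traceNorm_triangle' _ _) (add_le_add_right ih _)

lemma mix_identity {m : Type*} [Fintype m] [DecidableEq m] {N : ℕ}
    (p : Fin N → ℝ) (hp : ∑ j, (p j : ℂ) = 1)
    (f : Fin N → Matrix m m ℂ) (g Y : Matrix m m ℂ) :
    (∑ j, (p j : ℂ) • (f j * Y * (f j)ᴴ)) - g * Y * gᴴ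
      = (∑ j, (p j : ℂ) • ((f j - g) * Y * (f j - g)ᴴ))
        + (((∑ j, (p j : ℂ) • f j) - g) * Y * gᴴ
          + g * Y * ((∑ j, (p j : ℂ) • f j) - g)ᴴ) := by
  have hstar : ∀ j, star ((p j : ℂ)) = (p j : ℂ) := fun j => Complex.conj_ofReal _
  have expand : ∀ j : Fin N, (f j - g) * Y * (f j - g)ᴴ
      = f j * Y * (f j)ᴴ - f j * Y * gᴴ - g * Y * (f j)ᴴ + g * Y * gᴴ := by
    intro j
    rw [Matrix.conjTranspose_sub, Matrix.sub_mul, Matrix.mul_sub, Matrix.sub_mul, Matrix.sub_mul]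
    abel
  have hsum1 : ∑ j, (p j : ℂ) • (g * Y * gᴴ) = g * Y * gᴴ := by
    rw [← Finset.sum_smul, hp, one_smul]
  have hsum2 : ((∑ j, (p j : ℂ) • f j) - g) * Y * gᴴ
      = (∑ j, (p j : ℂ) • (f j * Y * gᴴ)) - g * Y * gᴴ := by
    rw [Matrix.sub_mul, Matrix.sub_mul, Finset.sum_mul, Finset.sum_mul]
    congr 1
    exact Finset.sum_congr rfl fun j _ => by
      rw [Matrix.smul_mul, Matrix.smul_mul]
  have hsum3 : g * Y * ((∑ j, (p j : ℂ) • f j) - g)ᴴ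
      = (∑ j, (p j : ℂ) • (g * Y * (f j)ᴴ)) - g * Y * gᴴ := by
    rw [Matrix.conjTranspose_sub, Matrix.mul_sub]
    congr 1
    rw [Matrix.conjTranspose_sum]
    simp only [Matrix.conjTranspose_smul, hstar]
    rw [Matrix.mul_sum]
    exact Finset.sum_congr rfl fun j _ => (Matrix.mul_smul _ _ _)
  rw [hsum2, hsum3]
  simp only [expand, smul_sub, smul_add, Finset.sum_add_distrib, Finset.sum_sub_distrib, hsum1]
  abel

lemma kron_sub_one {m : Type*} [Fintype m] [DecidableEq m] (A B : Matrix m m ℂ) :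
    (A - B) ⊗ₖ (1 : Matrix m m ℂ) = A ⊗ₖ (1 : Matrix m m ℂ) - B ⊗ₖ (1 : Matrix m m ℂ) := by
  ext ⟨i, j⟩ ⟨k, l⟩
  simp [Matrix.kroneckerMap_apply, Matrix.sub_apply, sub_mul]

lemma kron_conjTranspose_one {m : Type*} [Fintype m] [DecidableEq m] (A : Matrix m m ℂ) :
    (A ⊗ₖ (1 : Matrix m m ℂ))ᴴ = Aᴴ ⊗ₖ (1 : Matrix m m ℂ) := by
  ext ⟨i, j⟩ ⟨k, l⟩
  by_cases h : j = l <;>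
    simp [Matrix.conjTranspose_apply, Matrix.kroneckerMap_apply, Matrix.one_apply, h, eq_comm]

lemma kron_sum_smul_one {m : Type*} [Fintype m] [DecidableEq m] {N : ℕ}
    (p : Fin N → ℝ) (U : Fin N → Matrix m m ℂ) :
    (∑ j, (p j : ℂ) • U j) ⊗ₖ (1 : Matrix m m ℂ)
      = ∑ j, (p j : ℂ) • (U j ⊗ₖ (1 : Matrix m m ℂ)) := by
  ext ⟨i, j⟩ ⟨k, l⟩
  simp only [Matrix.kroneckerMap_apply, Matrix.sum_apply, Matrix.smul_apply, Finset.sum_mul,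
    smul_eq_mul, mul_assoc]

lemma mul_mul_le_of_le {x y t c : ℝ} (hx : x ≤ c) (hc : 0 ≤ c) (hy : y ≤ 1) (hy0 : 0 ≤ y)
    (ht : t ≤ 1) (ht0 : 0 ≤ t) : x * y * t ≤ c := by
  have h1 : x * y ≤ c * 1 := mul_le_mul hx hy hy0 hc
  rw [mul_one] at h1
  have h2 : x * y * t ≤ c * 1 := mul_le_mul h1 ht ht0 hc
  rwa [mul_one] at h2


/-- **Mixing lemma** (Campbell, Hastings): if each unitary `U j` is within spectral-norm
distance `a` of the unitary `V`, and the average `∑ j, p j • U j` is within spectral-norm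
distance `b` of `V`, then the diamond-norm distance between the mixed-unitary channel
`ρ ↦ ∑ j, p j • U j ρ (U j)ᴴ` and the channel `ρ ↦ V ρ Vᴴ` is at most `a² + 2b`,
written out explicitly on an arbitrary input `Y` with `‖Y‖₁ ≤ 1` (after tensoring with the
identity on a reference system of the same dimension). -/
theorem mixing_lemma {d N : ℕ}
    (V : Matrix (Fin d) (Fin d) ℂ) (U : Fin N → Matrix (Fin d) (Fin d) ℂ)
    (hV : V ∈ Matrix.unitaryGroup (Fin d) ℂ)
    (hU : ∀ j, U j ∈ Matrix.unitaryGroup (Fin d) ℂ)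
    (p : Fin N → ℝ) (hp : ∀ j, 0 ≤ p j) (hpsum : ∑ j, p j = 1)
    (a b : ℝ)
    (ha : ∀ j, ‖U j - V‖ ≤ a)
    (hb : ‖(∑ j, (p j : ℂ) • U j) - V‖ ≤ b) :
    ∀ Y : Matrix (Fin d × Fin d) (Fin d × Fin d) ℂ, traceNorm Y ≤ 1 →
      traceNorm
        ((∑ j, (p j : ℂ) •
            ((U j ⊗ₖ (1 : Matrix (Fin d) (Fin d) ℂ)) * Y *
              (U j ⊗ₖ (1 : Matrix (Fin d) (Fin d) ℂ))ᴴ)) -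
          (V ⊗ₖ (1 : Matrix (Fin d) (Fin d) ℂ)) * Y *
            (V ⊗ₖ (1 : Matrix (Fin d) (Fin d) ℂ))ᴴ)
        ≤ a ^ 2 + 2 * b := by
  intro Y hY
  have hN : N ≠ 0 := by
    intro h; subst h; simp at hpsum
  have ha0 : 0 ≤ a := le_trans (norm_nonneg _) (ha ⟨0, Nat.pos_of_ne_zero hN⟩)
  have hb0 : 0 ≤ b := le_trans (norm_nonneg _) hb
  have hY0 : 0 ≤ traceNorm Y := traceNorm_nonneg' Y
  set g : Matrix (Fin d × Fin d) (Fin d × Fin d) ℂ :=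
    V ⊗ₖ (1 : Matrix (Fin d) (Fin d) ℂ) with hg
  set f : Fin N → Matrix (Fin d × Fin d) (Fin d × Fin d) ℂ :=
    fun j => U j ⊗ₖ (1 : Matrix (Fin d) (Fin d) ℂ) with hf
  have hpsumC : ∑ j, (p j : ℂ) = 1 := by
    have := congrArg (fun x : ℝ => (x : ℂ)) hpsum
    push_cast at this
    exact this
  rw [mix_identity p hpsumC f g Y]
  have hgnorm : ‖g‖ ≤ 1 := le_trans (norm_kron_one_le V) (norm_unitary_le hV)
  have hfg : ∀ j, f j - g = (U j - V) ⊗ₖ (1 : Matrix (Fin d) (Fin d) ℂ) := fun j =>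
    (kron_sub_one _ _).symm
  have hfgnorm : ∀ j, ‖f j - g‖ ≤ a := fun j => by
    rw [hfg]; exact le_trans (norm_kron_one_le _) (ha j)
  have hMeq : (∑ j, (p j : ℂ) • f j) - g
      = ((∑ j, (p j : ℂ) • U j) - V) ⊗ₖ (1 : Matrix (Fin d) (Fin d) ℂ) := by
    rw [kron_sub_one, kron_sum_smul_one]
  have hMnorm : ‖(∑ j, (p j : ℂ) • f j) - g‖ ≤ b := by
    rw [hMeq]; exact le_trans (norm_kron_one_le _) hb
  -- bound each of the three pieces
  have hterm : ∀ j : Fin N,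
      traceNorm ((p j : ℂ) • ((f j - g) * Y * (f j - g)ᴴ)) ≤ p j * a ^ 2 := by
    intro j
    calc traceNorm ((p j : ℂ) • ((f j - g) * Y * (f j - g)ᴴ))
        ≤ p j * traceNorm ((f j - g) * Y * (f j - g)ᴴ) :=
          traceNorm_smul_le _ (hp j) _
      _ ≤ p j * a ^ 2 := by
          have h1 := traceNorm_mul_mul_le (f j - g) Y ((f j - g)ᴴ)
          have h2 : ‖(f j - g)ᴴ‖ = ‖f j - g‖ := Matrix.l2_opNorm_conjTranspose _
          have h3 : ‖f j - g‖ * ‖(f j - g)ᴴ‖ * traceNorm Y ≤ a ^ 2 := by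
            rw [h2]
            have h4 : ‖f j - g‖ * ‖f j - g‖ ≤ a * a :=
              mul_le_mul (hfgnorm j) (hfgnorm j) (norm_nonneg _) ha0
            have h5 : ‖f j - g‖ * ‖f j - g‖ * traceNorm Y ≤ (a * a) * 1 :=
              mul_le_mul h4 hY hY0 (mul_nonneg ha0 ha0)
            rw [mul_one] at h5
            rw [pow_two]
            exact h5
          exact mul_le_mul_of_nonneg_left (le_trans h1 h3) (hp j)
  have hS1 : traceNorm (∑ j, (p j : ℂ) • ((f j - g) * Y * (f j - g)ᴴ)) ≤ a ^ 2 := by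
    calc traceNorm (∑ j, (p j : ℂ) • ((f j - g) * Y * (f j - g)ᴴ))
        ≤ ∑ j, traceNorm ((p j : ℂ) • ((f j - g) * Y * (f j - g)ᴴ)) :=
          traceNorm_sum_le' _ _
      _ ≤ ∑ j, p j * a ^ 2 := Finset.sum_le_sum fun j _ => hterm j
      _ = a ^ 2 := by rw [← Finset.sum_mul, hpsum, one_mul]
  have hS2 : traceNorm (((∑ j, (p j : ℂ) • f j) - g) * Y * gᴴ) ≤ b := by
    have h1 := traceNorm_mul_mul_le ((∑ j, (p j : ℂ) • f j) - g) Y gᴴ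
    have h2 : ‖gᴴ‖ = ‖g‖ := Matrix.l2_opNorm_conjTranspose _
    have h3 : ‖(∑ j, (p j : ℂ) • f j) - g‖ * ‖gᴴ‖ * traceNorm Y ≤ b := by
      rw [h2]
      exact mul_mul_le_of_le hMnorm hb0 hgnorm (norm_nonneg _) hY hY0
    exact le_trans h1 h3
  have hS3 : traceNorm (g * Y * ((∑ j, (p j : ℂ) • f j) - g)ᴴ) ≤ b := by
    have h1 := traceNorm_mul_mul_le g Y (((∑ j, (p j : ℂ) • f j) - g)ᴴ)
    have h2 : ‖((∑ j, (p j : ℂ) • f j) - g)ᴴ‖ = ‖(∑ j, (p j : ℂ) • f j) - g‖ :=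
      Matrix.l2_opNorm_conjTranspose _
    have h3 : ‖g‖ * ‖((∑ j, (p j : ℂ) • f j) - g)ᴴ‖ * traceNorm Y ≤ b := by
      rw [h2, show ‖g‖ * ‖(∑ j, (p j : ℂ) • f j) - g‖ * traceNorm Y
        = ‖(∑ j, (p j : ℂ) • f j) - g‖ * ‖g‖ * traceNorm Y from by ring]
      exact mul_mul_le_of_le hMnorm hb0 hgnorm (norm_nonneg _) hY hY0
    exact le_trans h1 h3
  calc traceNorm ((∑ j, (p j : ℂ) • ((f j - g) * Y * (f j - g)ᴴ))
        + ((((∑ j, (p j : ℂ) • f j) - g) * Y * gᴴ)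
          + g * Y * ((∑ j, (p j : ℂ) • f j) - g)ᴴ))
      ≤ traceNorm (∑ j, (p j : ℂ) • ((f j - g) * Y * (f j - g)ᴴ))
        + traceNorm ((((∑ j, (p j : ℂ) • f j) - g) * Y * gᴴ)
          + g * Y * ((∑ j, (p j : ℂ) • f j) - g)ᴴ) := traceNorm_triangle' _ _
    _ ≤ traceNorm (∑ j, (p j : ℂ) • ((f j - g) * Y * (f j - g)ᴴ))
        + (traceNorm ((((∑ j, (p j : ℂ) • f j) - g) * Y * gᴴ))
          + traceNorm (g * Y * ((∑ j, (p j : ℂ) • f j) - g)ᴴ)) :=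
        add_le_add_right (traceNorm_triangle' _ _) _
    _ ≤ a ^ 2 + (b + b) := by
        have := add_le_add hS1 (add_le_add hS2 hS3)
        linarith
    _ = a ^ 2 + 2 * b := by ring
end

section
/- Randomization lemma: Let H_1, ..., H_L be d×d Hermitian matrices, let q_1, ..., q_κ be real numbers, let π_1, ..., π_κ ∈ Sym(L) be permutations, and let 1 ≤ s ≤ L. Order the positions (i, j) ∈ {1,...,κ} × {1,...,L} lexicographically (row-major: (i,j) < (i',j') iff i < i', or i = i' and j < j'). Then (1/L!) Σ_{σ ∈ Sym(L)} Σ_{(i_1,j_1) < (i_2,j_2) < ⋯ < (i_s,j_s), with σ(π_{i_1}(j_1)), ..., σ(π_{i_s}(j_s)) pairwise distinct} (q_{i_1} q_{i_2} ⋯ q_{i_s}) · H_{σ(π_{i_1}(j_1))} H_{σ(π_{i_2}(j_2))} ⋯ H_{σ(π_{i_s}(j_s))} = ((q_1 + ⋯ + q_κ)^s / s!) · Σ_{(m_1, ..., m_s) pairwise distinct, each in {1,...,L}} H_{m_1} H_{m_2} ⋯ H_{m_s}. (The left-hand side is the coefficient of λ^s in the s-th order nondegenerate term of the average evolution operator (1/L!)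 Σ_σ ∏_{i=1}^{κ} ∏_{j=1}^{L} exp(q_i λ H_{σ(π_i(j))}).) -/
open scoped Matrix.Norms.L2Operator ComplexOrder
open Matrix

section AuxRandomization

lemma exists_perm_extend' {s L : ℕ} (hsL : s ≤ L) (p : Fin s → Fin L)
    (hp : Function.Injective p) :
    ∃ τ : Equiv.Perm (Fin L), ∀ a : Fin s, τ (Fin.castLE hsL a) = p a := by
  classical
  let e0 : {x : Fin L // (x : ℕ) < s} ≃ Fin s :=
    { toFun := fun x => ⟨x.1.1, x.2⟩
      invFun := fun a => ⟨Fin.castLE hsL a, a.2⟩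
      left_inv := fun x => by ext; rfl
      right_inv := fun a => by ext; rfl }
  let e : {x : Fin L // (x : ℕ) < s} ≃ {x : Fin L // x ∈ Set.range p} :=
    e0.trans (Equiv.ofInjective p hp)
  refine ⟨Equiv.extendSubtype e, fun a => ?_⟩
  have h : ((Fin.castLE hsL a : Fin L) : ℕ) < s := a.2
  rw [Equiv.extendSubtype_apply_of_mem e _ h]
  have h0 : e0 ⟨Fin.castLE hsL a, h⟩ = a := by ext; rfl
  simp [e, h0, Equiv.ofInjective_apply]

lemma sum_comp_perm_eq' {M : Type*} [AddCommMonoid M] {s L : ℕ} (hsL : s ≤ L)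
    (F : (Fin s → Fin L) → M) {p : Fin s → Fin L} (hp : Function.Injective p) :
    ∑ σ : Equiv.Perm (Fin L), F (fun a => σ (p a)) =
      ∑ σ : Equiv.Perm (Fin L), F (fun a => σ (Fin.castLE hsL a)) := by
  obtain ⟨τ, hτ⟩ := exists_perm_extend' hsL p hp
  calc ∑ σ : Equiv.Perm (Fin L), F (fun a => σ (p a))
      = ∑ σ : Equiv.Perm (Fin L), F (fun a => (Equiv.mulRight τ σ) (Fin.castLE hsL a)) := by
        refine Finset.sum_congr rfl fun σ _ => ?_
        congr 1; funext a
        simp [Equiv.coe_mulRight, Equiv.Perm.mul_apply, hτ]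
    _ = ∑ σ : Equiv.Perm (Fin L), F (fun a => σ (Fin.castLE hsL a)) :=
        Equiv.sum_comp (Equiv.mulRight τ) (fun σ => F fun a => σ (Fin.castLE hsL a))

open Finset in
lemma card_fiber_eq' {s L : ℕ} (hsL : s ≤ L) (m : Fin s → Fin L) :
    (Finset.univ.filter fun σ : Equiv.Perm (Fin L) =>
        (fun a => σ (Fin.castLE hsL a)) = m).card =
      if (∀ a b : Fin s, m a = m b → a = b) then (L - s).factorial else 0 := by
  classical
  split_ifs with hm
  · have hminj : Function.Injective m := fun a b h => hm a b h
    obtain ⟨τ, hτ⟩ := exists_perm_extend' hsL m hminj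
    have h1 : (univ.filter fun σ : Equiv.Perm (Fin L) =>
          (fun a => σ (Fin.castLE hsL a)) = m).card =
        (univ.filter fun σ : Equiv.Perm (Fin L) =>
          (fun a => σ (Fin.castLE hsL a)) = Fin.castLE hsL).card := by
      refine Finset.card_bij' (fun σ _ => τ⁻¹ * σ) (fun σ _ => τ * σ) ?_ ?_ ?_ ?_
      · intro σ hσ
        have hσ' := (Finset.mem_filter.1 hσ).2
        refine Finset.mem_filter.2 ⟨Finset.mem_univ _, ?_⟩
        funext a
        have : σ (Fin.castLE hsL a) = m a := congrFun hσ' a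
        simp [Equiv.Perm.mul_apply, this, ← hτ a]
      · intro σ hσ
        have hσ' := (Finset.mem_filter.1 hσ).2
        refine Finset.mem_filter.2 ⟨Finset.mem_univ _, ?_⟩
        funext a
        have : σ (Fin.castLE hsL a) = Fin.castLE hsL a := congrFun hσ' a
        simp [Equiv.Perm.mul_apply, this, hτ a]
      · intro σ _; group
      · intro σ _; group
    rw [h1]
    have h2 : (univ.filter fun σ : Equiv.Perm (Fin L) =>
          (fun a => σ (Fin.castLE hsL a)) = Fin.castLE hsL).card
        = Fintype.card {σ : Equiv.Perm (Fin L) //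
            (fun a : Fin s => σ (Fin.castLE hsL a)) = Fin.castLE hsL} :=
      (Fintype.card_subtype _).symm
    rw [h2]
    have e0 : {σ : Equiv.Perm (Fin L) //
          (fun a : Fin s => σ (Fin.castLE hsL a)) = Fin.castLE hsL} ≃
        {σ : Equiv.Perm (Fin L) // ∀ x : Fin L, ¬¬((x : ℕ) < s) → σ x = x} := by
      refine Equiv.subtypeEquivRight fun σ => ?_
      rw [funext_iff]
      constructor
      · intro h x hx
        have hx' : (x : ℕ) < s := not_not.1 hx
        have := h ⟨x.1, hx'⟩
        have hcast : Fin.castLE hsL ⟨x.1, hx'⟩ = x := by ext; rfl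
        rwa [hcast] at this
      · intro h a
        exact h (Fin.castLE hsL a) (not_not.2 a.2)
    rw [Fintype.card_congr (e0.trans
      (Equiv.Perm.subtypeEquivSubtypePerm (fun x : Fin L => ¬((x : ℕ) < s))).symm)]
    rw [Fintype.card_perm]
    congr 1
    rw [Fintype.card_subtype_compl, Fintype.card_fin]
    congr 1
    have efin : {x : Fin L // (x : ℕ) < s} ≃ Fin s :=
      { toFun := fun x => ⟨x.1.1, x.2⟩
        invFun := fun a => ⟨Fin.castLE hsL a, a.2⟩
        left_inv := fun x => by ext; rfl
        right_inv := fun a => by ext; rfl }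
    rw [Fintype.card_congr efin, Fintype.card_fin]
  · rw [Finset.card_eq_zero, Finset.filter_eq_empty_iff]
    intro σ _ h
    exact hm fun a b hab => Fin.castLE_injective hsL (σ.injective (by
      have ha := congrFun h a
      have hb := congrFun h b
      rw [ha, hb]; exact hab))

open Finset in
lemma sum_perm_castLE' {M : Type*} [AddCommMonoid M] {s L : ℕ} (hsL : s ≤ L)
    (F : (Fin s → Fin L) → M) :
    ∑ σ : Equiv.Perm (Fin L), F (fun a => σ (Fin.castLE hsL a)) =
      (L - s).factorial •
        ∑ m : Fin s → Fin L, (if ∀ a b : Fin s, m a = m b → a = b then F m else 0) := by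
  classical
  calc ∑ σ : Equiv.Perm (Fin L), F (fun a => σ (Fin.castLE hsL a))
      = ∑ σ : Equiv.Perm (Fin L), ∑ m : Fin s → Fin L,
          if (fun a => σ (Fin.castLE hsL a)) = m then F m else 0 := by
        refine Finset.sum_congr rfl fun σ _ => ?_
        rw [Finset.sum_ite_eq _ (fun a => σ (Fin.castLE hsL a)) F, if_pos (Finset.mem_univ _)]
    _ = ∑ m : Fin s → Fin L, ∑ σ : Equiv.Perm (Fin L),
          if (fun a => σ (Fin.castLE hsL a)) = m then F m else 0 := Finset.sum_comm
    _ = ∑ m : Fin s → Fin L,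
          (univ.filter fun σ : Equiv.Perm (Fin L) =>
            (fun a => σ (Fin.castLE hsL a)) = m).card • F m := by
        refine Finset.sum_congr rfl fun m _ => ?_
        rw [← Finset.sum_filter, Finset.sum_const]
    _ = ∑ m : Fin s → Fin L,
          (if ∀ a b : Fin s, m a = m b → a = b then (L - s).factorial else 0) • F m := by
        refine Finset.sum_congr rfl fun m _ => ?_
        rw [card_fiber_eq' hsL m]
    _ = (L - s).factorial •
          ∑ m : Fin s → Fin L, (if ∀ a b : Fin s, m a = m b → a = b then F m else 0) := by
        rw [Finset.smul_sum]
        refine Finset.sum_congr rfl fun m _ => ?_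
        split_ifs with h
        · rfl
        · simp

variable {κ L s : ℕ}

/-- Positions finset associated to a subset of values with a row assignment. -/
noncomputable def TofAux (π : Fin κ → Equiv.Perm (Fin L))
    (b : Σ V : Finset (Fin L), ∀ v ∈ V, Fin κ) : Finset (Fin κ ×ₗ Fin L) :=
  b.1.attach.image (fun v => toLex (b.2 v.1 v.2, (π (b.2 v.1 v.2)).symm v.1))

lemma TofAux_card (π : Fin κ → Equiv.Perm (Fin L))
    (b : Σ V : Finset (Fin L), ∀ v ∈ V, Fin κ) : (TofAux π b).card = b.1.card := by
  rw [TofAux]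
  rw [Finset.card_image_of_injOn, Finset.card_attach]
  intro v _ w _ h
  have h' := toLex.injective h
  have h1 : b.2 v.1 v.2 = b.2 w.1 w.2 := congrArg Prod.fst h'
  have h2 : (π (b.2 v.1 v.2)).symm v.1 = (π (b.2 w.1 w.2)).symm w.1 :=
    congrArg Prod.snd h'
  rw [← h1] at h2
  have := (π (b.2 v.1 v.2)).symm.injective h2
  exact Subtype.ext this

lemma mem_TofAux {π : Fin κ → Equiv.Perm (Fin L)}
    {b : Σ V : Finset (Fin L), ∀ v ∈ V, Fin κ} {x : Fin κ ×ₗ Fin L} :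
    x ∈ TofAux π b ↔ ∃ (v : Fin L) (hv : v ∈ b.1),
      x = toLex (b.2 v hv, (π (b.2 v hv)).symm v) := by
  simp only [TofAux, Finset.mem_image, Finset.mem_attach, true_and, Subtype.exists]
  constructor
  · rintro ⟨v, hv, rfl⟩; exact ⟨v, hv, rfl⟩
  · rintro ⟨v, hv, rfl⟩; exact ⟨v, hv, rfl⟩

lemma sigma_ext_aux' {α β : Type*} {V V' : Finset α} (h : V' = V)
    {g' : ∀ v ∈ V', β} {g : ∀ v ∈ V, β}
    (hg : ∀ v (hv' : v ∈ V') (hv : v ∈ V), g' v hv' = g v hv) :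
    (⟨V', g'⟩ : Σ V : Finset α, ∀ v ∈ V, β) = ⟨V, g⟩ := by
  subst h
  have : g' = g := funext fun v => funext fun hv => hg v hv hv
  rw [this]

lemma scalar_sum' (hs : 1 ≤ s) (q : Fin κ → ℝ) (π : Fin κ → Equiv.Perm (Fin L)) :
    (∑ c : Fin s → Fin κ × Fin L,
        if (∀ a b : Fin s, a < b → toLex (c a) < toLex (c b)) ∧
            (∀ a b : Fin s, π (c a).1 (c a).2 = π (c b).1 (c b).2 → a = b) then
          ∏ a : Fin s, ((q (c a).1 : ℂ)) else 0)
      = (L.choose s : ℂ) * (∑ i, (q i : ℂ)) ^ s := by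
  classical
  haveI : Nonempty (Fin s) := ⟨⟨0, hs⟩⟩
  rw [← Finset.sum_filter]
  have key : ∑ c ∈ Finset.univ.filter (fun c : Fin s → Fin κ × Fin L =>
        (∀ a b : Fin s, a < b → toLex (c a) < toLex (c b)) ∧
        (∀ a b : Fin s, π (c a).1 (c a).2 = π (c b).1 (c b).2 → a = b)),
        ∏ a : Fin s, ((q (c a).1 : ℝ) : ℂ)
      = ∑ b ∈ ((Finset.univ.powersetCard s).sigma
            (fun V : Finset (Fin L) => V.pi fun _ => (Finset.univ : Finset (Fin κ)))),
          ∏ v ∈ b.1.attach, ((q (b.2 v.1 v.2) : ℝ) : ℂ) := by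
    refine Finset.sum_bij'
      (fun c _ => (⟨Finset.univ.image (fun a => π (c a).1 (c a).2),
          fun v _ => (c (Function.invFun (fun a => π (c a).1 (c a).2) v)).1⟩ :
          Σ V : Finset (Fin L), ∀ v ∈ V, Fin κ))
      (fun b hb => fun a => ofLex ((TofAux π b).orderEmbOfFin
          (by rw [TofAux_card]; exact (Finset.mem_powersetCard.1 (Finset.mem_sigma.1 hb).1).2) a))
      ?_ ?_ ?_ ?_ ?_
    · intro c hc
      obtain ⟨-, h1, h2⟩ := Finset.mem_filter.1 hc
      have hinj : Function.Injective fun a : Fin s => π (c a).1 (c a).2 :=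
        fun a b h => h2 a b h
      refine Finset.mem_sigma.2 ⟨Finset.mem_powersetCard.2 ⟨Finset.subset_univ _, ?_⟩, ?_⟩
      · rw [Finset.card_image_of_injective _ hinj, Finset.card_univ, Fintype.card_fin]
      · exact Finset.mem_pi.2 fun v hv => Finset.mem_univ _
    · intro b hb
      have main : ∀ (hpf : (TofAux π b).card = s),
          (fun a => ofLex ((TofAux π b).orderEmbOfFin hpf a)) ∈
            Finset.univ.filter (fun c : Fin s → Fin κ × Fin L =>
              (∀ a b : Fin s, a < b → toLex (c a) < toLex (c b)) ∧
              (∀ a b : Fin s, π (c a).1 (c a).2 = π (c b).1 (c b).2 → a = b)) := by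
        intro hpf
        refine Finset.mem_filter.2 ⟨Finset.mem_univ _, ?_, ?_⟩
        · intro a a' h
          simpa using ((TofAux π b).orderEmbOfFin hpf).strictMono h
        · intro a a' hval
          simp only at hval
          obtain ⟨v, hv, hva⟩ := mem_TofAux.1 ((TofAux π b).orderEmbOfFin_mem hpf a)
          obtain ⟨w, hw, hwa⟩ := mem_TofAux.1 ((TofAux π b).orderEmbOfFin_mem hpf a')
          rw [hva, hwa] at hval
          simp only [ofLex_toLex, Equiv.apply_symm_apply] at hval
          apply ((TofAux π b).orderEmbOfFin hpf).injective
          rw [hva, hwa]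
          subst hval
          rfl
      exact main _
    · intro c hc
      obtain ⟨-, h1, h2⟩ := Finset.mem_filter.1 hc
      have hinj : Function.Injective fun a : Fin s => π (c a).1 (c a).2 :=
        fun a b h => h2 a b h
      have hmono : StrictMono (fun x : Fin s => toLex (c x)) := fun x y h => h1 x y h
      have hfs : ∀ x : Fin s, toLex (c x) ∈ TofAux π
          ⟨Finset.univ.image (fun a => π (c a).1 (c a).2),
            fun v _ => (c (Function.invFun (fun a => π (c a).1 (c a).2) v)).1⟩ := by
        intro x
        refine mem_TofAux.2 ⟨π (c x).1 (c x).2,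
          Finset.mem_image_of_mem _ (Finset.mem_univ x), ?_⟩
        have hx : Function.invFun (fun a : Fin s => π (c a).1 (c a).2)
            (π (c x).1 (c x).2) = x := Function.leftInverse_invFun hinj x
        simp [hx]
      have main : ∀ (hpf : (TofAux π
          (⟨Finset.univ.image (fun a => π (c a).1 (c a).2),
            fun v _ => (c (Function.invFun (fun a => π (c a).1 (c a).2) v)).1⟩ :
            Σ V : Finset (Fin L), ∀ v ∈ V, Fin κ)).card = s),
          (fun a => ofLex ((TofAux π
            (⟨Finset.univ.image (fun a => π (c a).1 (c a).2),
              fun v _ => (c (Function.invFun (fun a => π (c a).1 (c a).2) v)).1⟩ :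
              Σ V : Finset (Fin L), ∀ v ∈ V, Fin κ)).orderEmbOfFin hpf a)) = c := by
        intro hpf
        have hu := Finset.orderEmbOfFin_unique hpf hfs hmono
        funext a
        rw [← congrFun hu a]
        simp
      exact main _
    · intro b hb
      obtain ⟨V, g⟩ := b
      have hV : V.card = s := (Finset.mem_powersetCard.1 (Finset.mem_sigma.1 hb).1).2
      have hTinj : ∀ x ∈ TofAux π (⟨V, g⟩ : Σ V : Finset (Fin L), ∀ v ∈ V, Fin κ),
          ∀ y ∈ TofAux π (⟨V, g⟩ : Σ V : Finset (Fin L), ∀ v ∈ V, Fin κ),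
          π (ofLex x).1 (ofLex x).2 = π (ofLex y).1 (ofLex y).2 → x = y := by
        intro x hx y hy hxy
        obtain ⟨v, hv, rfl⟩ := mem_TofAux.1 hx
        obtain ⟨w, hw, rfl⟩ := mem_TofAux.1 hy
        simp only [ofLex_toLex, Equiv.apply_symm_apply] at hxy
        subst hxy
        rfl
      have main : ∀ (hpf : (TofAux π (⟨V, g⟩ : Σ V : Finset (Fin L), ∀ v ∈ V, Fin κ)).card = s),
          ((⟨Finset.univ.image (fun a =>
              π (ofLex ((TofAux π (⟨V, g⟩ : Σ V : Finset (Fin L), ∀ v ∈ V, Fin κ)).orderEmbOfFin hpf a)).1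
                (ofLex ((TofAux π (⟨V, g⟩ : Σ V : Finset (Fin L), ∀ v ∈ V, Fin κ)).orderEmbOfFin hpf a)).2),
            fun v _ => (ofLex ((TofAux π (⟨V, g⟩ : Σ V : Finset (Fin L), ∀ v ∈ V, Fin κ)).orderEmbOfFin hpf
              (Function.invFun (fun a =>
                π (ofLex ((TofAux π (⟨V, g⟩ : Σ V : Finset (Fin L), ∀ v ∈ V, Fin κ)).orderEmbOfFin hpf a)).1
                  (ofLex ((TofAux π (⟨V, g⟩ : Σ V : Finset (Fin L), ∀ v ∈ V, Fin κ)).orderEmbOfFin hpf a)).2) v))).1⟩ :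
            Σ V : Finset (Fin L), ∀ v ∈ V, Fin κ)) = ⟨V, g⟩ := by
        intro hpf
        set T := TofAux π (⟨V, g⟩ : Σ V : Finset (Fin L), ∀ v ∈ V, Fin κ) with hT
        set f := T.orderEmbOfFin hpf with hf
        set u : Fin s → Fin L := fun a => π (ofLex (f a)).1 (ofLex (f a)).2 with hudef
        have hex : ∀ a : Fin s, ∃ (v : Fin L) (hv : v ∈ V),
            (f a : Fin κ ×ₗ Fin L) = toLex (g v hv, (π (g v hv)).symm v) :=
          fun a => mem_TofAux.1 (T.orderEmbOfFin_mem hpf a)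
        have huV : ∀ a : Fin s, u a ∈ V := by
          intro a
          obtain ⟨v, hv, hva⟩ := hex a
          have : u a = v := by rw [hudef]; simp only [hva, ofLex_toLex, Equiv.apply_symm_apply]
          rw [this]; exact hv
        have hformula : ∀ (a : Fin s) (hva : u a ∈ V),
            (ofLex (f a)) = (g (u a) hva, (π (g (u a) hva)).symm (u a)) := by
          intro a hva
          obtain ⟨v, hv, h⟩ := hex a
          have huav : u a = v := by rw [hudef]; simp only [h, ofLex_toLex, Equiv.apply_symm_apply]
          subst huav
          rw [h]
          rfl
        have huinj : Function.Injective u := by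
          intro a a' h
          apply f.injective
          exact hTinj _ (T.orderEmbOfFin_mem hpf a) _ (T.orderEmbOfFin_mem hpf a') h
        have hVeq : Finset.univ.image u = V := by
          apply Finset.eq_of_subset_of_card_le
          · intro v hv
            obtain ⟨a, -, rfl⟩ := Finset.mem_image.1 hv
            exact huV a
          · rw [Finset.card_image_of_injective _ huinj, Finset.card_univ, Fintype.card_fin, hV]
        refine sigma_ext_aux' hVeq ?_
        intro v hv' hv
        obtain ⟨a, -, rfl⟩ := Finset.mem_image.1 hv'
        have hinva : Function.invFun u (u a) = a := Function.leftInverse_invFun huinj a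
        rw [hinva, hformula a hv]
      exact main _
    · intro c hc
      obtain ⟨-, h1, h2⟩ := Finset.mem_filter.1 hc
      have hinj : Function.Injective fun a : Fin s => π (c a).1 (c a).2 :=
        fun a b h => h2 a b h
      have hinj' : ∀ x ∈ (Finset.univ : Finset (Fin s)), ∀ y ∈ (Finset.univ : Finset (Fin s)),
          π (c x).1 (c x).2 = π (c y).1 (c y).2 → x = y := fun x _ y _ h => hinj h
      symm
      rw [Finset.prod_attach (Finset.univ.image (fun a => π (c a).1 (c a).2))
        (fun v => ((q ((c (Function.invFun (fun a : Fin s => π (c a).1 (c a).2) v)).1) : ℝ) : ℂ))]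
      rw [Finset.prod_image hinj']
      refine Finset.prod_congr rfl fun a _ => ?_
      rw [Function.leftInverse_invFun hinj a]
  rw [key, Finset.sum_sigma]
  have inner : ∀ V ∈ (Finset.univ.powersetCard s : Finset (Finset (Fin L))),
      ∑ g ∈ V.pi (fun _ => (Finset.univ : Finset (Fin κ))),
        ∏ v ∈ V.attach, ((q (g v.1 v.2) : ℝ) : ℂ) = (∑ i, ((q i : ℝ) : ℂ)) ^ s := by
    intro V hV
    have h2 := Finset.prod_sum (s := V) (t := fun _ => (Finset.univ : Finset (Fin κ)))
      (f := fun _ i => ((q i : ℝ) : ℂ))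
    rw [← h2, Finset.prod_const, (Finset.mem_powersetCard.1 hV).2]
  rw [Finset.sum_congr rfl inner, Finset.sum_const, Finset.card_powersetCard,
    Finset.card_univ, Fintype.card_fin, nsmul_eq_mul]

end AuxRandomization

/-- **Randomization lemma**: averaging over a uniformly random relabeling `σ` of the summands,
the `s`-th order nondegenerate term of the product formula
`∏_{i=1}^{κ} ∏_{j=1}^{L} exp(q_i λ H_{σ(π_i(j))})` equals
`((q_1 + ⋯ + q_κ)^s / s!) Σ_{m_1,…,m_s pairwise distinct} H_{m_1} ⋯ H_{m_s}`
(coefficients of `λ^s`).  The inner sum on the left ranges over strictly increasing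
(row-major lexicographic) `s`-tuples of positions `(i_a, j_a)` in the `κ × L` array such that
the indices `σ(π_{i_a}(j_a))` are pairwise distinct. -/
theorem randomization_lemma {d L κ : ℕ}
    (H : Fin L → Matrix (Fin d) (Fin d) ℂ) (hH : ∀ j, (H j).IsHermitian)
    (q : Fin κ → ℝ) (π : Fin κ → Equiv.Perm (Fin L))
    (s : ℕ) (hs : 1 ≤ s) (hsL : s ≤ L) :
    (L.factorial : ℂ)⁻¹ •
      ∑ σ : Equiv.Perm (Fin L), ∑ c : Fin s → Fin κ × Fin L,
        (if (∀ a b : Fin s, a < b → toLex (c a) < toLex (c b)) ∧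
            (∀ a b : Fin s,
              σ (π (c a).1 (c a).2) = σ (π (c b).1 (c b).2) → a = b) then
          (∏ a : Fin s, ((q (c a).1 : ℂ))) •
            (List.ofFn fun a : Fin s => H (σ (π (c a).1 (c a).2))).prod
        else 0)
    = (((∑ i, q i : ℝ) : ℂ) ^ s / (s.factorial : ℂ)) •
        ∑ m : Fin s → Fin L,
          (if ∀ a b : Fin s, m a = m b → a = b then
            (List.ofFn fun a : Fin s => H (m a)).prod
          else 0) := by
  classical
  set K : Matrix (Fin d) (Fin d) ℂ :=
    ∑ σ : Equiv.Perm (Fin L), (List.ofFn fun a : Fin s => H (σ (Fin.castLE hsL a))).prod with hK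
  have hswap : ∀ c : Fin s → Fin κ × Fin L,
      (∑ σ : Equiv.Perm (Fin L),
        if (∀ a b : Fin s, a < b → toLex (c a) < toLex (c b)) ∧
            (∀ a b : Fin s,
              σ (π (c a).1 (c a).2) = σ (π (c b).1 (c b).2) → a = b) then
          (∏ a : Fin s, ((q (c a).1 : ℂ))) •
            (List.ofFn fun a : Fin s => H (σ (π (c a).1 (c a).2))).prod
        else 0)
      = (if (∀ a b : Fin s, a < b → toLex (c a) < toLex (c b)) ∧
            (∀ a b : Fin s, π (c a).1 (c a).2 = π (c b).1 (c b).2 → a = b) then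
          (∏ a : Fin s, ((q (c a).1 : ℂ))) • K else 0) := by
    intro c
    by_cases h2 : ∀ a b : Fin s, π (c a).1 (c a).2 = π (c b).1 (c b).2 → a = b
    · by_cases h1 : ∀ a b : Fin s, a < b → toLex (c a) < toLex (c b)
      · have hinj : Function.Injective fun a : Fin s => π (c a).1 (c a).2 :=
          fun a b h => h2 a b h
        rw [if_pos ⟨h1, h2⟩]
        have : ∀ σ : Equiv.Perm (Fin L),
            (if (∀ a b : Fin s, a < b → toLex (c a) < toLex (c b)) ∧
                (∀ a b : Fin s,
                  σ (π (c a).1 (c a).2) = σ (π (c b).1 (c b).2) → a = b) then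
              (∏ a : Fin s, ((q (c a).1 : ℂ))) •
                (List.ofFn fun a : Fin s => H (σ (π (c a).1 (c a).2))).prod
            else 0)
            = (∏ a : Fin s, ((q (c a).1 : ℂ))) •
                (List.ofFn fun a : Fin s => H (σ (π (c a).1 (c a).2))).prod := by
          intro σ
          exact if_pos ⟨h1, fun a b hab => h2 a b (σ.injective hab)⟩
        rw [Finset.sum_congr rfl fun σ _ => this σ, ← Finset.smul_sum]
        congr 1
        exact sum_comp_perm_eq' hsL
          (fun m => (List.ofFn fun a : Fin s => H (m a)).prod) hinj
      · rw [if_neg (fun hco => h1 hco.1)]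
        refine Finset.sum_eq_zero fun σ _ => ?_
        exact if_neg (fun hco => h1 hco.1)
    · rw [if_neg (fun hco => h2 hco.2)]
      refine Finset.sum_eq_zero fun σ _ => ?_
      refine if_neg (fun hco => h2 ?_)
      intro a b hab
      exact hco.2 a b (by rw [hab])
  rw [Finset.sum_comm]
  rw [Finset.sum_congr rfl fun c (_ : c ∈ Finset.univ) => hswap c]
  have hfactor : ∑ c : Fin s → Fin κ × Fin L,
      (if (∀ a b : Fin s, a < b → toLex (c a) < toLex (c b)) ∧
          (∀ a b : Fin s, π (c a).1 (c a).2 = π (c b).1 (c b).2 → a = b) then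
        (∏ a : Fin s, ((q (c a).1 : ℂ))) • K else 0)
      = (∑ c : Fin s → Fin κ × Fin L,
          if (∀ a b : Fin s, a < b → toLex (c a) < toLex (c b)) ∧
              (∀ a b : Fin s, π (c a).1 (c a).2 = π (c b).1 (c b).2 → a = b) then
            (∏ a : Fin s, ((q (c a).1 : ℂ))) else 0) • K := by
    rw [Finset.sum_smul]
    refine Finset.sum_congr rfl fun c _ => ?_
    rw [ite_smul, zero_smul]
  rw [hfactor, scalar_sum' hs q π]
  have hKval : K = (L - s).factorial •
      ∑ m : Fin s → Fin L,
        (if ∀ a b : Fin s, m a = m b → a = b then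
          (List.ofFn fun a : Fin s => H (m a)).prod else 0) :=
    sum_perm_castLE' hsL (fun m => (List.ofFn fun a : Fin s => H (m a)).prod)
  rw [hKval, ← Nat.cast_smul_eq_nsmul ℂ ((L - s).factorial), smul_smul, smul_smul]
  congr 1
  have h1 : ((L.choose s : ℂ)) * (s.factorial : ℂ) * ((L - s).factorial : ℂ)
      = (L.factorial : ℂ) := by
    exact_mod_cast congrArg (Nat.cast (R := ℂ)) (Nat.choose_mul_factorial_mul_factorial hsL)
  have hs0 : (s.factorial : ℂ) ≠ 0 := Nat.cast_ne_zero.2 (Nat.factorial_ne_zero s)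
  have hL0 : (L.factorial : ℂ) ≠ 0 := Nat.cast_ne_zero.2 (Nat.factorial_ne_zero L)
  push_cast
  field_simp
  linear_combination ((∑ i, (q i : ℂ)) ^ s) * h1
end

section
/- Spectral-norm error of the first-order Lie–Trotter formula: Let H_1, ..., H_L be d×d Hermitian matrices with Λ := max_j ‖H_j‖ and λ ∈ ℂ. Then ‖exp(λ Σ_{j=1}^L H_j) − exp(λH_1)exp(λH_2)⋯exp(λH_L)‖ ≤ (Λ|λ|L)² · exp(Λ|λ|L). -/
open scoped Matrix.Norms.L2Operator ComplexOrder
open scoped Nat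
open Matrix


lemma real_exp_tail (x : ℝ) :
    Real.exp x - 1 - x = ∑' n : ℕ, x ^ (n + 2) / (n + 2)! := by
  have hs : Summable fun n : ℕ => x ^ n / n ! := Real.summable_pow_div_factorial x
  have h2 := Summable.sum_add_tsum_nat_add 2 hs
  have he : Real.exp x = ∑' n : ℕ, x ^ n / n ! := by
    rw [Real.exp_eq_exp_ℝ, NormedSpace.exp_eq_tsum_div]
  rw [he, ← h2]
  simp [Finset.sum_range_succ]
  ring

lemma exp_tail {𝔸 : Type*} [NormedRing 𝔸] [NormedAlgebra ℂ 𝔸] [CompleteSpace 𝔸] (M : 𝔸) :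
    NormedSpace.exp M - 1 - M = ∑' n : ℕ, (((n + 2)! : ℂ))⁻¹ • M ^ (n + 2) := by
  have hs : Summable fun n : ℕ => ((n ! : ℂ))⁻¹ • M ^ n := NormedSpace.expSeries_summable' M
  have h2 := Summable.sum_add_tsum_nat_add 2 hs
  have he : NormedSpace.exp M = ∑' n : ℕ, ((n ! : ℂ))⁻¹ • M ^ n := by
    rw [NormedSpace.exp_eq_tsum (𝕂 := ℂ)]
  rw [he, ← h2]
  simp [Finset.sum_range_succ]
  abel

lemma exp_sub_mono {s t : ℝ} (hs : 0 ≤ s) (hst : s ≤ t) :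
    Real.exp s - 1 - s ≤ Real.exp t - 1 - t := by
  have h1 : Real.exp t = Real.exp s * Real.exp (t - s) := by
    rw [← Real.exp_add]; ring_nf
  have h2 : t - s + 1 ≤ Real.exp (t - s) := Real.add_one_le_exp _
  have h3 : 1 ≤ Real.exp s := Real.one_le_exp hs
  nlinarith [Real.exp_pos s]

lemma two_mul_exp_tail_le (x : ℝ) (hx : 0 ≤ x) :
    2 * (Real.exp x - 1 - x) ≤ x ^ 2 * Real.exp x := by
  rw [real_exp_tail]
  have hs : Summable fun n : ℕ => x ^ (n + 2) / (n + 2)! :=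
    (summable_nat_add_iff 2).mpr (Real.summable_pow_div_factorial x)
  have he : x ^ 2 * Real.exp x = ∑' n : ℕ, x ^ 2 * (x ^ n / n !) := by
    rw [Real.exp_eq_exp_ℝ, NormedSpace.exp_eq_tsum_div, tsum_mul_left]
  rw [he, ← tsum_mul_left]
  refine Summable.tsum_le_tsum (fun n => ?_) (hs.mul_left 2)
    ((Real.summable_pow_div_factorial x).mul_left _)
  have hfac : 2 * (n ! : ℝ) ≤ ((n + 2)! : ℝ) := by
    have h : 2 * n ! ≤ (n + 2)! := by
      have h1 : (n + 2)! = (n + 2) * ((n + 1) * n !) := by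
        rw [Nat.factorial_succ, Nat.factorial_succ]
      rw [h1]
      have := Nat.factorial_pos n
      calc 2 * n ! ≤ (n + 2) * n ! := Nat.mul_le_mul_right _ (by omega)
        _ ≤ (n + 2) * ((n + 1) * n !) := Nat.mul_le_mul_left _ (Nat.le_mul_of_pos_left _ (by omega))
    exact_mod_cast h
  have ha : (0 : ℝ) < n ! := by exact_mod_cast Nat.factorial_pos n
  have hb : (0 : ℝ) < (n + 2)! := by exact_mod_cast Nat.factorial_pos (n + 2)
  have h2 : 2 / ((n + 2)! : ℝ) ≤ 1 / (n ! : ℝ) := by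
    rw [div_le_div_iff₀ hb ha]; linarith
  calc 2 * (x ^ (n + 2) / (n + 2)!) = x ^ 2 * x ^ n * (2 / ((n + 2)! : ℝ)) := by
        rw [pow_add]; ring
    _ ≤ x ^ 2 * x ^ n * (1 / (n ! : ℝ)) := by
        apply mul_le_mul_of_nonneg_left h2 (by positivity)
    _ = x ^ 2 * (x ^ n / n !) := by ring

set_option maxHeartbeats 1000000 in
lemma exp_remainder {𝔸 : Type*} [NormedRing 𝔸] [NormedAlgebra ℂ 𝔸] [CompleteSpace 𝔸] (M : 𝔸) :
    ‖NormedSpace.exp M - 1 - M‖ ≤ Real.exp ‖M‖ - 1 - ‖M‖ := by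
  rw [exp_tail, real_exp_tail]
  have hns : Summable fun n : ℕ => ‖(((n + 2)! : ℂ))⁻¹ • M ^ (n + 2)‖ :=
    (summable_nat_add_iff 2).mpr (NormedSpace.norm_expSeries_summable' M)
  refine (norm_tsum_le_tsum_norm hns).trans ?_
  refine Summable.tsum_le_tsum (fun n => ?_) hns
    ((summable_nat_add_iff 2).mpr (Real.summable_pow_div_factorial ‖M‖))
  rw [norm_smul]
  have h1 : ‖(((n + 2)! : ℂ))⁻¹‖ = (((n + 2)! : ℝ))⁻¹ := by
    rw [norm_inv]; norm_num
  have hp : ‖M ^ (n + 2)‖ ≤ ‖M‖ ^ (n + 2) := norm_pow_le' M (Nat.succ_pos _)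
  have hi : (0 : ℝ) ≤ (((n + 2)! : ℝ))⁻¹ := by positivity
  rw [h1, div_eq_mul_inv, mul_comm (‖M‖ ^ (n + 2))]
  exact mul_le_mul_of_nonneg_left hp hi

lemma list_norm_sum {𝔸 : Type*} [NormedRing 𝔸] (m : ℝ) :
    ∀ l : List 𝔸, (∀ M ∈ l, ‖M‖ ≤ m) → ‖l.sum‖ ≤ l.length * m
  | [], _ => by simp
  | M :: l, h => by
    have ih := list_norm_sum m l fun N hN => h N (by simp [hN])
    simp only [List.sum_cons, List.length_cons]
    push_cast
    calc ‖M + l.sum‖ ≤ ‖M‖ + ‖l.sum‖ := norm_add_le _ _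
      _ ≤ m + l.length * m := add_le_add (h M (by simp)) ih
      _ = (l.length + 1) * m := by ring

lemma list_prod_one_add {𝔸 : Type*} [NormedRing 𝔸] (hone : ‖(1 : 𝔸)‖ ≤ 1)
    (m : ℝ) (hm : 0 ≤ m) :
    ∀ l : List 𝔸, (∀ M ∈ l, ‖M‖ ≤ m) →
      ‖(l.map (fun M => 1 + M)).prod - 1 - l.sum‖ ≤ (1 + m) ^ l.length - 1 - l.length * m
  | [], _ => by simp
  | M :: l, h => by
    have hM : ‖M‖ ≤ m := h M (by simp)
    have htail : ∀ N ∈ l, ‖N‖ ≤ m := fun N hN => h N (by simp [hN])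
    have ih := list_prod_one_add hone m hm l htail
    have hsum : ‖l.sum‖ ≤ l.length * m := list_norm_sum m l htail
    set P := (l.map (fun M => 1 + M)).prod with hP
    set S := l.sum with hSdef
    have key : ((M :: l).map (fun M => 1 + M)).prod - 1 - (M :: l).sum
        = (1 + M) * (P - 1 - S) + M * S := by
      simp only [List.map_cons, List.prod_cons, List.sum_cons, ← hP, ← hSdef]
      noncomm_ring
    have hbern : (0:ℝ) ≤ (1 + m) ^ l.length - 1 - l.length * m := by
      have h := one_add_mul_le_pow (a := m) (by linarith) l.length
      linarith
    rw [key]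
    calc ‖(1 + M) * (P - 1 - S) + M * S‖ ≤ ‖1 + M‖ * ‖P - 1 - S‖ + ‖M‖ * ‖S‖ :=
          (norm_add_le _ _).trans (add_le_add (norm_mul_le _ _) (norm_mul_le _ _))
      _ ≤ (1 + m) * ((1 + m) ^ l.length - 1 - l.length * m) + m * (l.length * m) := by
          have h1M : ‖1 + M‖ ≤ 1 + m := (norm_add_le _ _).trans (add_le_add hone hM)
          have hS0 : (0 : ℝ) ≤ ↑l.length * m := le_trans (norm_nonneg _) hsum
          gcongr
      _ = (1 + m) ^ (M :: l).length - 1 - (M :: l).length * m := by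
          simp only [List.length_cons]
          push_cast
          ring

/-- **Spectral-norm error of the first-order Lie–Trotter formula**:
`‖exp(λ Σ_j H_j) - exp(λH₁)exp(λH₂)⋯exp(λH_L)‖ ≤ (Λ|λ|L)² exp(Λ|λ|L)`,
where `Λ = max_j ‖H_j‖`. -/
theorem spectral_norm_error_first_order_trotter {d L : ℕ}
    (H : Fin L → Matrix (Fin d) (Fin d) ℂ) (hH : ∀ j, (H j).IsHermitian)
    (lam : ℂ) (Λ : ℝ) (hΛ : Λ = ⨆ j, ‖H j‖) :
    ‖NormedSpace.exp (lam • ∑ j, H j) -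
        (List.ofFn fun j => NormedSpace.exp (lam • H j)).prod‖ ≤
      (Λ * ‖lam‖ * L) ^ 2 * Real.exp (Λ * ‖lam‖ * L) := by
  rcases Nat.eq_zero_or_pos L with hL | hL
  · subst hL
    simp [NormedSpace.exp_zero]
  haveI : Nonempty (Fin L) := Fin.pos_iff_nonempty.mp hL
  have hbd : ∀ j, ‖H j‖ ≤ Λ := by
    intro j
    rw [hΛ]
    exact le_ciSup (Set.Finite.bddAbove (Set.finite_range fun j => ‖H j‖)) j
  have hΛ0 : 0 ≤ Λ := le_trans (norm_nonneg _) (hbd (Classical.arbitrary _))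
  rcases Nat.eq_zero_or_pos d with hd | hd
  · subst hd
    haveI : Subsingleton (Matrix (Fin 0) (Fin 0) ℂ) :=
      ⟨fun A B => by ext i; exact i.elim0⟩
    rw [Subsingleton.elim (NormedSpace.exp (lam • ∑ j, H j) -
        (List.ofFn fun j => NormedSpace.exp (lam • H j)).prod) 0, norm_zero]
    positivity
  haveI : Nonempty (Fin d) := Fin.pos_iff_nonempty.mp hd
  have hone : ‖(1 : Matrix (Fin d) (Fin d) ℂ)‖ ≤ 1 := le_of_eq norm_one
  set a := Λ * ‖lam‖ with ha
  have ha0 : 0 ≤ a := mul_nonneg hΛ0 (norm_nonneg _)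
  set x := a * L with hxd
  have hx0 : 0 ≤ x := mul_nonneg ha0 (Nat.cast_nonneg _)
  have hnorm : ∀ j, ‖lam • H j‖ ≤ a := by
    intro j
    rw [norm_smul, ha, mul_comm Λ]
    exact mul_le_mul_of_nonneg_left (hbd j) (norm_nonneg _)
  set S : Matrix (Fin d) (Fin d) ℂ := lam • ∑ j, H j with hSd
  have hSs : S = ∑ j, lam • H j := Finset.smul_sum
  have hSnorm : ‖S‖ ≤ x := by
    rw [hSs]
    calc ‖∑ j, lam • H j‖ ≤ ∑ j, ‖lam • H j‖ := norm_sum_le _ _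
      _ ≤ ∑ _j : Fin L, a := Finset.sum_le_sum fun j _ => hnorm j
      _ = L * a := by simp [Finset.sum_const, nsmul_eq_mul]
      _ = x := mul_comm _ _
  have h1 : ‖NormedSpace.exp S - 1 - S‖ ≤ Real.exp x - 1 - x :=
    (exp_remainder S).trans (exp_sub_mono (norm_nonneg _) hSnorm)
  have hrem : ∀ j, ‖NormedSpace.exp (lam • H j) - 1 - lam • H j‖ ≤ Real.exp a - 1 - a :=
    fun j => (exp_remainder _).trans (exp_sub_mono (norm_nonneg _) (hnorm j))
  set l : List (Matrix (Fin d) (Fin d) ℂ) :=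
    List.ofFn (fun j => NormedSpace.exp (lam • H j) - 1) with hld
  set B : Matrix (Fin d) (Fin d) ℂ :=
    (List.ofFn fun j => NormedSpace.exp (lam • H j)).prod with hBd
  have hmap : (l.map fun M => 1 + M).prod = B := by
    rw [hld, List.map_ofFn, hBd]
    refine congrArg List.prod (congrArg List.ofFn (funext fun j => ?_))
    simp only [Function.comp_apply]
    abel
  have hm0 : (0 : ℝ) ≤ Real.exp a - 1 := by
    have := Real.one_le_exp ha0; linarith
  have hmemb : ∀ M ∈ l, ‖M‖ ≤ Real.exp a - 1 := by
    intro M hM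
    rw [hld, List.mem_ofFn] at hM
    obtain ⟨j, rfl⟩ := hM
    show ‖NormedSpace.exp (lam • H j) - 1‖ ≤ Real.exp a - 1
    have hkey : NormedSpace.exp (lam • H j) - 1
        = (NormedSpace.exp (lam • H j) - 1 - lam • H j) + lam • H j := by abel
    rw [hkey]
    calc ‖_ + _‖ ≤ ‖NormedSpace.exp (lam • H j) - 1 - lam • H j‖ + ‖lam • H j‖ :=
          norm_add_le _ _
      _ ≤ (Real.exp a - 1 - a) + a := add_le_add (hrem j) (hnorm j)
      _ = Real.exp a - 1 := by ring
  have h2 := list_prod_one_add hone _ hm0 l hmemb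
  rw [hmap] at h2
  have hlen : l.length = L := by rw [hld]; simp
  have hexpL : (1 + (Real.exp a - 1)) ^ l.length = Real.exp x := by
    rw [hlen, hxd, mul_comm a, Real.exp_nat_mul]
    norm_num
  rw [hexpL, hlen] at h2
  have hlsum : l.sum = ∑ j, (NormedSpace.exp (lam • H j) - 1) := by
    rw [hld]; exact List.sum_ofFn
  have h3 : ‖l.sum - S‖ ≤ L * (Real.exp a - 1 - a) := by
    have hes : l.sum - S = ∑ j, (NormedSpace.exp (lam • H j) - 1 - lam • H j) := by
      rw [hlsum, hSs, ← Finset.sum_sub_distrib]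
    rw [hes]
    calc ‖∑ j, (NormedSpace.exp (lam • H j) - 1 - lam • H j)‖
        ≤ ∑ j, ‖NormedSpace.exp (lam • H j) - 1 - lam • H j‖ := norm_sum_le _ _
      _ ≤ ∑ _j : Fin L, (Real.exp a - 1 - a) := Finset.sum_le_sum fun j _ => hrem j
      _ = L * (Real.exp a - 1 - a) := by simp [Finset.sum_const, nsmul_eq_mul]; ring
  have hB : ‖B - 1 - S‖ ≤ Real.exp x - 1 - x := by
    have hsplit : B - 1 - S = (B - 1 - l.sum) + (l.sum - S) := by abel
    rw [hsplit]
    calc ‖_ + _‖ ≤ ‖B - 1 - l.sum‖ + ‖l.sum - S‖ := norm_add_le _ _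
      _ ≤ (Real.exp x - 1 - L * (Real.exp a - 1)) + L * (Real.exp a - 1 - a) :=
          add_le_add h2 h3
      _ = Real.exp x - 1 - x := by rw [hxd]; ring
  have hdiff : NormedSpace.exp S - B = (NormedSpace.exp S - 1 - S) - (B - 1 - S) := by
    abel
  calc ‖NormedSpace.exp S - B‖
      ≤ ‖NormedSpace.exp S - 1 - S‖ + ‖B - 1 - S‖ := by
        rw [hdiff]; exact norm_sub_le _ _
    _ ≤ (Real.exp x - 1 - x) + (Real.exp x - 1 - x) := add_le_add h1 hB
    _ = 2 * (Real.exp x - 1 - x) := by ring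
    _ ≤ x ^ 2 * Real.exp x := two_mul_exp_tail_le x hx0
end

section
/- Spectral-norm error of the averaged forward/reverse first-order formula: Let H_1, ..., H_L be d×d Hermitian matrices with Λ := max_j ‖H_j‖ and λ ∈ ℂ. Set S₁(λ) := exp(λH_1)exp(λH_2)⋯exp(λH_L) and S₁ʳᵉᵛ(λ) := exp(λH_L)⋯exp(λH_2)exp(λH_1). Then ‖exp(λ Σ_{j=1}^L H_j) − ½(S₁(λ) + S₁ʳᵉᵛ(λ))‖ ≤ ((Λ|λ|L)³ / 3) · exp(Λ|λ|L). -/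
open scoped Matrix.Norms.L2Operator ComplexOrder
open Matrix


noncomputable def gT (t : ℝ) : ℝ := Real.exp t - (1 + t + t ^ 2 / 2)

lemma summable_pow_fact (t : ℝ) : Summable fun n : ℕ => t ^ n / (n.factorial) :=
  NormedSpace.expSeries_div_summable t

lemma summable_pow_fact_shift (t : ℝ) : Summable fun i : ℕ => t ^ (i + 3) / ((i + 3).factorial) :=
  (summable_nat_add_iff 3).2 (summable_pow_fact t)

lemma gT_eq (t : ℝ) : gT t = ∑' i : ℕ, t ^ (i + 3) / ((i + 3).factorial) := by
  have h := Summable.sum_add_tsum_nat_add 3 (summable_pow_fact t)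
  have hexp : Real.exp t = ∑' n : ℕ, t ^ n / (n.factorial) := by
    rw [Real.exp_eq_exp_ℝ, NormedSpace.exp_eq_tsum_div]
  have hsum : ∑ i ∈ Finset.range 3, t ^ i / (i.factorial) = 1 + t + t ^ 2 / 2 := by
    simp [Finset.sum_range_succ, Nat.factorial]
  rw [gT, hexp, ← h, hsum]
  ring

lemma gT_nonneg {t : ℝ} (ht : 0 ≤ t) : 0 ≤ gT t := by
  rw [gT_eq]
  exact tsum_nonneg fun i => by positivity

lemma gT_mono {t s : ℝ} (ht : 0 ≤ t) (hts : t ≤ s) : gT t ≤ gT s := by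
  rw [gT_eq, gT_eq]
  refine Summable.tsum_le_tsum (fun i => ?_) (summable_pow_fact_shift t) (summable_pow_fact_shift s)
  gcongr

lemma six_mul_fact_le (i : ℕ) : 6 * (i.factorial) ≤ ((i + 3).factorial) := by
  have h : ((i + 3).factorial) = (i + 3) * ((i + 2) * ((i + 1) * (i.factorial))) := by
    simp [Nat.factorial_succ]
  rw [h]
  have h6 : 6 ≤ (i + 3) * ((i + 2) * (i + 1)) :=
    calc 6 = 3 * (2 * 1) := by norm_num
    _ ≤ (i + 3) * ((i + 2) * (i + 1)) :=
      Nat.mul_le_mul (by omega) (Nat.mul_le_mul (by omega) (by omega))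
  calc 6 * (i.factorial) ≤ ((i + 3) * ((i + 2) * (i + 1))) * (i.factorial) := Nat.mul_le_mul_right _ h6
    _ = (i + 3) * ((i + 2) * ((i + 1) * (i.factorial))) := by ring

lemma gT_le {t : ℝ} (ht : 0 ≤ t) : gT t ≤ t ^ 3 / 6 * Real.exp t := by
  rw [gT_eq]
  have hexp : Real.exp t = ∑' n : ℕ, t ^ n / (n.factorial) := by
    rw [Real.exp_eq_exp_ℝ, NormedSpace.exp_eq_tsum_div]
  rw [hexp, ← tsum_mul_left]
  refine Summable.tsum_le_tsum (fun i => ?_) (summable_pow_fact_shift t)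
    ((summable_pow_fact t).mul_left _)
  have h1 : t ^ (i + 3) / ((i + 3).factorial) ≤ t ^ (i + 3) / (6 * (i.factorial)) := by
    apply div_le_div_of_nonneg_left (by positivity) (by positivity)
    exact_mod_cast six_mul_fact_le i
  refine h1.trans (le_of_eq ?_)
  rw [pow_add]
  have : ((i.factorial) : ℝ) ≠ 0 := by positivity
  field_simp
section BanachAlg

open NormedSpace

variable {A : Type*} [NormedRing A] [NormedAlgebra ℂ A] [CompleteSpace A]

lemma norm_term_le (a : A) (n : ℕ) (hn : 0 < n) :
    ‖((n.factorial : ℂ))⁻¹ • a ^ n‖ ≤ ‖a‖ ^ n / n.factorial := by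
  rw [norm_smul]
  have h1 : ‖((n.factorial : ℂ))⁻¹‖ = ((n.factorial : ℝ))⁻¹ := by
    rw [norm_inv]
    norm_num
  rw [h1, div_eq_inv_mul]
  gcongr
  exact norm_pow_le' a hn

lemma summable_norm_term_shift (a : A) :
    Summable fun i : ℕ => ‖(((i + 3).factorial : ℂ))⁻¹ • a ^ (i + 3)‖ := by
  refine Summable.of_nonneg_of_le (fun i => norm_nonneg _)
    (fun i => norm_term_le a (i + 3) (by omega)) (summable_pow_fact_shift ‖a‖)

lemma exp_taylor2 (a : A) :
    ‖exp a - (1 + a + (2 : ℂ)⁻¹ • a ^ 2)‖ ≤ gT ‖a‖ := by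
  have hs : Summable fun n : ℕ => ((n.factorial : ℂ))⁻¹ • a ^ n :=
    expSeries_summable' (𝕂 := ℂ) a
  have hexp : exp a = ∑' n : ℕ, ((n.factorial : ℂ))⁻¹ • a ^ n := by
    rw [exp_eq_tsum (𝕂 := ℂ)]
  have hsplit := Summable.sum_add_tsum_nat_add 3 hs
  have hsum3 : ∑ n ∈ Finset.range 3, ((n.factorial : ℂ))⁻¹ • a ^ n
      = 1 + a + (2 : ℂ)⁻¹ • a ^ 2 := by
    simp [Finset.sum_range_succ, Nat.factorial]
  have hdiff : exp a - (1 + a + (2 : ℂ)⁻¹ • a ^ 2)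
      = ∑' i : ℕ, (((i + 3).factorial : ℂ))⁻¹ • a ^ (i + 3) := by
    rw [hexp, ← hsplit, hsum3]
    abel
  rw [hdiff, gT_eq]
  refine (norm_tsum_le_tsum_norm (summable_norm_term_shift a)).trans ?_
  exact Summable.tsum_le_tsum (fun i => norm_term_le a (i + 3) (by omega))
    (summable_norm_term_shift a) (summable_pow_fact_shift ‖a‖)

lemma norm_exp_le' (h1 : ‖(1 : A)‖ ≤ 1) (a : A) : ‖exp a‖ ≤ Real.exp ‖a‖ := by
  have h := exp_taylor2 a
  have h2 : ‖(1 : A) + a + (2 : ℂ)⁻¹ • a ^ 2‖ ≤ 1 + ‖a‖ + ‖a‖ ^ 2 / 2 := by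
    refine (norm_add_le _ _).trans ?_
    have hb : ‖(2 : ℂ)⁻¹ • a ^ 2‖ ≤ ‖a‖ ^ 2 / 2 := by
      rw [norm_smul]
      have : ‖(2 : ℂ)⁻¹‖ = 2⁻¹ := by norm_num
      rw [this]
      have := norm_pow_le' a (n := 2) (by omega)
      nlinarith [norm_nonneg (a ^ 2)]
    have := norm_add_le (1 : A) a
    nlinarith
  calc ‖exp a‖ ≤ ‖exp a - (1 + a + (2 : ℂ)⁻¹ • a ^ 2)‖
        + ‖(1 : A) + a + (2 : ℂ)⁻¹ • a ^ 2‖ := by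
        have := norm_sub_norm_le (exp a) (1 + a + (2 : ℂ)⁻¹ • a ^ 2)
        nlinarith [norm_nonneg (exp a - (1 + a + (2 : ℂ)⁻¹ • a ^ 2))]
    _ ≤ gT ‖a‖ + (1 + ‖a‖ + ‖a‖ ^ 2 / 2) := add_le_add h h2
    _ = Real.exp ‖a‖ := by rw [gT]; ring

end BanachAlg
section Corr

open NormedSpace

variable {A : Type*} [NormedRing A] [NormedAlgebra ℂ A] [CompleteSpace A]

noncomputable def corr : List A → A
  | [] => 0
  | a :: l => (2 : ℂ)⁻¹ • a ^ 2 + a * l.sum + corr l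

@[simp] lemma corr_nil : corr ([] : List A) = 0 := rfl

lemma corr_cons (a : A) (l : List A) :
    corr (a :: l) = (2 : ℂ)⁻¹ • a ^ 2 + a * l.sum + corr l := rfl

lemma corr_append (l₁ l₂ : List A) :
    corr (l₁ ++ l₂) = corr l₁ + l₁.sum * l₂.sum + corr l₂ := by
  induction l₁ with
  | nil => simp
  | cons a t ih =>
    simp only [List.cons_append, corr_cons, ih, List.sum_append, List.sum_cons]
    simp only [mul_add, add_mul]
    abel

lemma corr_add_corr_reverse (l : List A) :
    corr l + corr l.reverse = l.sum ^ 2 := by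
  induction l with
  | nil => simp
  | cons a t ih =>
    have hrev : (a :: t).reverse = t.reverse ++ [a] := by simp
    rw [hrev, corr_append, corr_cons]
    have h1 : corr [a] = (2 : ℂ)⁻¹ • a ^ 2 := by simp [corr_cons]
    have h2 : (t.reverse).sum = t.sum := List.sum_reverse t
    simp only [h1, h2, List.sum_cons, List.sum_nil, add_zero]
    have hhalf : (2 : ℂ)⁻¹ • a ^ 2 + (2 : ℂ)⁻¹ • a ^ 2 = a ^ 2 := by
      rw [← add_smul]; norm_num
    have e : (2 : ℂ)⁻¹ • a ^ 2 + a * t.sum + corr t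
          + (corr t.reverse + t.sum * a + (2 : ℂ)⁻¹ • a ^ 2)
        = ((2 : ℂ)⁻¹ • a ^ 2 + (2 : ℂ)⁻¹ • a ^ 2)
          + (a * t.sum + (t.sum * a + (corr t + corr t.reverse))) := by
      abel
    have hsq : (a + t.sum) ^ 2 = a ^ 2 + (a * t.sum + (t.sum * a + t.sum ^ 2)) := by
      rw [sq, sq, sq, add_mul, mul_add, mul_add]
      abel
    rw [e, hhalf, ih, hsq]

lemma norm_list_sum_le {r : ℝ} {l : List A} (hl : ∀ a ∈ l, ‖a‖ ≤ r) :
    ‖l.sum‖ ≤ r * l.length := by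
  induction l with
  | nil => simp
  | cons a t ih =>
    rw [List.sum_cons]
    refine (norm_add_le _ _).trans ?_
    have h1 : ‖a‖ ≤ r := hl a (by simp)
    have h2 : ‖t.sum‖ ≤ r * t.length := ih fun b hb => hl b (by simp [hb])
    simp only [List.length_cons]
    push_cast
    nlinarith

lemma norm_corr_le {r : ℝ} (hr : 0 ≤ r) {l : List A} (hl : ∀ a ∈ l, ‖a‖ ≤ r) :
    ‖corr l‖ ≤ (r * l.length) ^ 2 / 2 := by
  induction l with
  | nil => simp
  | cons a t ih =>
    rw [corr_cons]
    refine ((norm_add_le _ _).trans (add_le_add (norm_add_le _ _) le_rfl)).trans ?_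
    have ha : ‖a‖ ≤ r := hl a (by simp)
    have ht : ∀ b ∈ t, ‖b‖ ≤ r := fun b hb => hl b (by simp [hb])
    have h1 : ‖(2 : ℂ)⁻¹ • a ^ 2‖ ≤ r ^ 2 / 2 := by
      rw [norm_smul]
      have hn : ‖(2 : ℂ)⁻¹‖ = 2⁻¹ := by norm_num
      rw [hn]
      have := norm_pow_le' a (n := 2) (by omega)
      have := norm_nonneg (a ^ 2)
      nlinarith [ha, norm_nonneg a]
    have h2 : ‖a * t.sum‖ ≤ r * (r * t.length) := by
      refine (norm_mul_le _ _).trans ?_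
      have := norm_list_sum_le ht
      have := norm_nonneg (t.sum)
      have := norm_nonneg a
      nlinarith
    have h3 : ‖corr t‖ ≤ (r * t.length) ^ 2 / 2 := ih ht
    simp only [List.length_cons]
    push_cast
    nlinarith [Nat.cast_nonneg (α := ℝ) t.length]

set_option maxHeartbeats 1000000 in
lemma prod_exp_taylor (h1 : ‖(1 : A)‖ ≤ 1) {r : ℝ} (hr : 0 ≤ r) :
    ∀ (l : List A), (∀ a ∈ l, ‖a‖ ≤ r) →
      ‖(l.map exp).prod - (1 + l.sum + corr l)‖ ≤ gT (r * l.length) := by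
  intro l
  induction l with
  | nil =>
    intro _
    simp [gT]
  | cons a t ih =>
    intro hl
    have ha : ‖a‖ ≤ r := hl a (by simp)
    have ht : ∀ b ∈ t, ‖b‖ ≤ r := fun b hb => hl b (by simp [hb])
    set n : ℝ := (t.length : ℝ) with hn
    have hn0 : 0 ≤ n := Nat.cast_nonneg _
    set x : ℝ := r * n with hx
    have hx0 : 0 ≤ x := mul_nonneg hr hn0
    set b : A := (2 : ℂ)⁻¹ • a ^ 2 with hb
    set P : A := (t.map exp).prod with hP
    set Q : A := 1 + t.sum + corr t with hQ
    set S : A := t.sum with hS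
    set M : A := corr t with hM
    have hbnorm : ‖b‖ ≤ r ^ 2 / 2 := by
      rw [hb, norm_smul]
      have hnn : ‖(2 : ℂ)⁻¹‖ = 2⁻¹ := by norm_num
      rw [hnn]
      have h2 := norm_pow_le' a (n := 2) (by omega)
      have := norm_nonneg (a ^ 2)
      have hra : ‖a‖ ^ 2 ≤ r ^ 2 := by nlinarith [norm_nonneg a]
      nlinarith
    have hSnorm : ‖S‖ ≤ x := by rw [hS, hx, hn]; exact norm_list_sum_le ht
    have hMnorm : ‖M‖ ≤ x ^ 2 / 2 := by rw [hM, hx, hn]; exact norm_corr_le hr ht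
    have hdecomp :
        ((a :: t).map exp).prod - (1 + (a :: t).sum + corr (a :: t))
          = exp a * (P - Q) + (exp a - (1 + a + b)) * Q
            + (a * M + (b * S + b * M)) := by
      rw [List.map_cons, List.prod_cons, corr_cons, List.sum_cons, ← hb, ← hP, ← hS, ← hM, hQ]
      noncomm_ring
    rw [hdecomp]
    have e1 : ‖exp a * (P - Q)‖ ≤ Real.exp r * gT x := by
      refine (norm_mul_le _ _).trans ?_
      have hexpa : ‖exp a‖ ≤ Real.exp r :=
        (norm_exp_le' h1 a).trans (Real.exp_le_exp.2 ha)
      have hPQ : ‖P - Q‖ ≤ gT x := by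
        rw [hP, hQ, hx, hn]; exact ih ht
      have := norm_nonneg (P - Q)
      have := (Real.exp_pos r).le
      nlinarith [gT_nonneg hx0]
    have e2 : ‖(exp a - (1 + a + b)) * Q‖ ≤ gT r * (1 + x + x ^ 2 / 2) := by
      refine (norm_mul_le _ _).trans ?_
      have hT : ‖exp a - (1 + a + b)‖ ≤ gT r :=
        (exp_taylor2 a).trans (gT_mono (norm_nonneg a) ha)
      have hQn : ‖Q‖ ≤ 1 + x + x ^ 2 / 2 := by
        rw [hQ]
        refine (norm_add_le _ _).trans ?_
        have := norm_add_le (1 : A) t.sum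
        have h1' := h1
        nlinarith [hSnorm, hMnorm, norm_nonneg (corr t)]
      have := norm_nonneg Q
      nlinarith [gT_nonneg hr]
    have e3 : ‖a * M + (b * S + b * M)‖
        ≤ r * (x ^ 2 / 2) + (r ^ 2 / 2 * x + r ^ 2 / 2 * (x ^ 2 / 2)) := by
      refine (norm_add_le _ _).trans (add_le_add ?_ ((norm_add_le _ _).trans (add_le_add ?_ ?_)))
      · refine (norm_mul_le _ _).trans ?_
        nlinarith [norm_nonneg a, norm_nonneg M, hMnorm, ha]
      · refine (norm_mul_le _ _).trans ?_
        nlinarith [norm_nonneg b, norm_nonneg S, hSnorm, hbnorm]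
      · refine (norm_mul_le _ _).trans ?_
        nlinarith [norm_nonneg b, norm_nonneg M, hMnorm, hbnorm]
    have hlen : (r * ((a :: t).length : ℝ)) = x + r := by
      simp only [List.length_cons]
      push_cast
      rw [hx, hn]
      ring
    rw [hlen]
    have total2 := norm_add_le (exp a * (P - Q)) ((exp a - (1 + a + b)) * Q)
    have total := norm_add_le (exp a * (P - Q) + (exp a - (1 + a + b)) * Q)
      (a * M + (b * S + b * M))
    have hgid : gT (x + r) = Real.exp r * gT x + gT r * (1 + x + x ^ 2 / 2)
        + (r * (x ^ 2 / 2) + (r ^ 2 / 2 * x + r ^ 2 / 2 * (x ^ 2 / 2))) := by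
      simp only [gT, Real.exp_add]
      ring
    rw [hgid]
    linarith

end Corr
lemma ofFn_rev' {α : Type*} {n : ℕ} (f : Fin n → α) :
    List.ofFn (fun i => f i.rev) = (List.ofFn f).reverse := by
  apply List.ext_getElem (by simp)
  intro i hi1 hi2
  simp only [List.getElem_ofFn, List.getElem_reverse, List.length_ofFn]
  congr 1
  ext
  simp only [Fin.rev]
  omega

set_option maxHeartbeats 1000000 in
/-- **Spectral-norm error of the averaged forward/reverse first-order formula**: with
`S₁(λ) = exp(λH₁)exp(λH₂)⋯exp(λH_L)` and `S₁ʳᵉᵛ(λ) = exp(λH_L)⋯exp(λH₂)exp(λH₁)`,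
`‖exp(λ Σ_j H_j) - ½(S₁(λ) + S₁ʳᵉᵛ(λ))‖ ≤ ((Λ|λ|L)³/3) exp(Λ|λ|L)`,
where `Λ = max_j ‖H_j‖`. -/
theorem spectral_norm_error_averaged_first_order {d L : ℕ}
    (H : Fin L → Matrix (Fin d) (Fin d) ℂ) (hH : ∀ j, (H j).IsHermitian)
    (lam : ℂ) (Λ : ℝ) (hΛ : Λ = ⨆ j, ‖H j‖) :
    ‖NormedSpace.exp (lam • ∑ j, H j) -
        (2 : ℂ)⁻¹ • ((List.ofFn fun j => NormedSpace.exp (lam • H j)).prod +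
          (List.ofFn fun j : Fin L => NormedSpace.exp (lam • H j.rev)).prod)‖ ≤
      (Λ * ‖lam‖ * L) ^ 3 / 3 * Real.exp (Λ * ‖lam‖ * L) := by
  classical
  haveI : CompleteSpace (Matrix (Fin d) (Fin d) ℂ) := FiniteDimensional.complete ℂ _
  have h1 : ‖(1 : Matrix (Fin d) (Fin d) ℂ)‖ ≤ 1 := by
    rw [Matrix.cstar_norm_def, _root_.map_one]
    rw [ContinuousLinearMap.one_def]
    exact ContinuousLinearMap.norm_id_le
  have hΛ0 : 0 ≤ Λ := by
    rcases isEmpty_or_nonempty (Fin L) with h | h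
    · rw [hΛ, Real.iSup_of_isEmpty]
    · refine le_trans (norm_nonneg (H (Classical.arbitrary _))) ?_
      rw [hΛ]
      exact le_ciSup (Set.Finite.bddAbove (Set.finite_range fun j => ‖H j‖))
        (Classical.arbitrary _)
  set r : ℝ := Λ * ‖lam‖ with hrdef
  have hr : 0 ≤ r := mul_nonneg hΛ0 (norm_nonneg _)
  set l : List (Matrix (Fin d) (Fin d) ℂ) := List.ofFn (fun j : Fin L => lam • H j) with hl
  have hmem : ∀ a ∈ l, ‖a‖ ≤ r := by
    intro a ha
    rw [hl, List.mem_ofFn] at ha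
    obtain ⟨j, rfl⟩ := ha
    rw [norm_smul]
    have hj : ‖H j‖ ≤ Λ := by
      rw [hΛ]
      exact le_ciSup (Set.Finite.bddAbove (Set.finite_range fun j => ‖H j‖)) j
    have h2 : ‖lam‖ * ‖H j‖ ≤ ‖lam‖ * Λ :=
      mul_le_mul_of_nonneg_left hj (norm_nonneg _)
    rw [hrdef]
    nlinarith [h2]
  have hmemrev : ∀ a ∈ l.reverse, ‖a‖ ≤ r := fun a ha => hmem a (List.mem_reverse.mp ha)
  have hlen : (l.length : ℝ) = L := by rw [hl, List.length_ofFn]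
  have hlenrev : (l.reverse.length : ℝ) = L := by rw [List.length_reverse, hlen]
  have hsum : l.sum = lam • ∑ j, H j := by rw [hl, List.sum_ofFn, ← Finset.smul_sum]
  have hsumrev : l.reverse.sum = l.sum := List.sum_reverse l
  set x : ℝ := r * L with hxdef
  have hx0 : 0 ≤ x := mul_nonneg hr (Nat.cast_nonneg _)
  set F := (l.map NormedSpace.exp).prod with hF
  set Rv := (l.reverse.map NormedSpace.exp).prod with hRv
  have hFeq : (List.ofFn fun j => NormedSpace.exp (lam • H j)).prod = F := by
    rw [hF, hl, List.map_ofFn]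
    rfl
  have hRveq : (List.ofFn fun j : Fin L => NormedSpace.exp (lam • H j.rev)).prod = Rv := by
    have h' := congrArg List.prod (ofFn_rev' (fun j : Fin L => NormedSpace.exp (lam • H j)))
    rw [h', hRv, List.map_reverse, hl, List.map_ofFn]
    simp only [Function.comp_def]
  rw [hFeq, hRveq, ← hsum]
  set S := l.sum with hS
  have hcorr : corr l.reverse = S ^ 2 - corr l := by
    rw [eq_sub_iff_add_eq, add_comm]
    exact corr_add_corr_reverse l
  have key : NormedSpace.exp S - (2 : ℂ)⁻¹ • (F + Rv)
      = (NormedSpace.exp S - (1 + S + (2 : ℂ)⁻¹ • S ^ 2))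
        + ((2 : ℂ)⁻¹ • ((1 + S + corr l) - F)
          + (2 : ℂ)⁻¹ • ((1 + S + corr l.reverse) - Rv)) := by
    rw [hcorr]
    module
  rw [key]
  have hSx : ‖S‖ ≤ x := by
    rw [hxdef, ← hlen]
    exact norm_list_sum_le hmem
  have t1 : ‖NormedSpace.exp S - (1 + S + (2 : ℂ)⁻¹ • S ^ 2)‖ ≤ gT x :=
    (exp_taylor2 S).trans (gT_mono (norm_nonneg S) hSx)
  have t2 : ‖(2 : ℂ)⁻¹ • ((1 + S + corr l) - F)‖ ≤ 2⁻¹ * gT x := by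
    rw [norm_smul]
    have hn : ‖(2 : ℂ)⁻¹‖ = 2⁻¹ := by norm_num
    rw [hn]
    have := prod_exp_taylor h1 hr l hmem
    rw [hlen] at this
    rw [norm_sub_rev]
    have h0 : (0 : ℝ) ≤ 2⁻¹ := by norm_num
    exact mul_le_mul_of_nonneg_left (by rw [hF, hS]; exact this) h0
  have t3 : ‖(2 : ℂ)⁻¹ • ((1 + S + corr l.reverse) - Rv)‖ ≤ 2⁻¹ * gT x := by
    rw [norm_smul]
    have hn : ‖(2 : ℂ)⁻¹‖ = 2⁻¹ := by norm_num
    rw [hn]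
    have := prod_exp_taylor h1 hr l.reverse hmemrev
    rw [hlenrev] at this
    rw [norm_sub_rev]
    have h0 : (0 : ℝ) ≤ 2⁻¹ := by norm_num
    rw [hsumrev] at this
    exact mul_le_mul_of_nonneg_left (by rw [hRv, hS]; exact this) h0
  have htot := norm_add_le (NormedSpace.exp S - (1 + S + (2 : ℂ)⁻¹ • S ^ 2))
    ((2 : ℂ)⁻¹ • ((1 + S + corr l) - F) + (2 : ℂ)⁻¹ • ((1 + S + corr l.reverse) - Rv))
  have htot2 := norm_add_le ((2 : ℂ)⁻¹ • ((1 + S + corr l) - F))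
    ((2 : ℂ)⁻¹ • ((1 + S + corr l.reverse) - Rv))
  have hgle : gT x ≤ x ^ 3 / 6 * Real.exp x := gT_le hx0
  have : x ^ 3 / 3 * Real.exp x = 2 * (x ^ 3 / 6 * Real.exp x) := by ring
  rw [this]
  linarith
end

section
/- Sufficient number of segments for the randomized first-order formula: For all real numbers x ≥ 1, ε with 0 < ε ≤ 1, and r ≥ 3·x^{3/2}/√ε, the first-order randomized error bound satisfies (x⁴/r³)·exp(2x/r) + (2x³/(3r²))·exp(x/r) ≤ ε. (Taking x = Λ|t|L, this shows that r = O((Λ|t|L)^{3/2}/ε^{1/2}) segments suffice to make the error bound of the randomized first-order product formula at most ε.) -/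
/-- **Sufficient number of segments for the randomized first-order formula**: for all real
`x ≥ 1`, `0 < ε ≤ 1`, and `r ≥ 3x^{3/2}/√ε`, the randomized first-order error bound satisfies
`(x⁴/r³)exp(2x/r) + (2x³/(3r²))exp(x/r) ≤ ε`.  (Taking `x = Λ|t|L`, this shows
`r = O((Λ|t|L)^{3/2}/ε^{1/2})` segments suffice.) -/
theorem randomized_first_order_segments_suffice (x ε r : ℝ)
    (hx : 1 ≤ x) (hε0 : 0 < ε) (hε1 : ε ≤ 1)
    (hr : 3 * x ^ ((3 : ℝ) / 2) / Real.sqrt ε ≤ r) :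
    x ^ 4 / r ^ 3 * Real.exp (2 * x / r) + 2 * x ^ 3 / (3 * r ^ 2) * Real.exp (x / r) ≤ ε := by
  have hx0 : (0:ℝ) < x := lt_of_lt_of_le one_pos hx
  set y := Real.sqrt x with hy
  set s := Real.sqrt ε with hs
  have hy1 : 1 ≤ y := by
    rw [hy, show (1:ℝ) = Real.sqrt 1 by simp]
    exact Real.sqrt_le_sqrt hx
  have hs0 : 0 < s := Real.sqrt_pos.mpr hε0
  have hs1 : s ≤ 1 := by
    rw [hs, show (1:ℝ) = Real.sqrt 1 by simp]
    exact Real.sqrt_le_sqrt hε1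
  have hxy : x = y ^ 2 := (Real.sq_sqrt hx0.le).symm
  have hεs : ε = s ^ 2 := (Real.sq_sqrt hε0.le).symm
  have hx32 : x ^ ((3:ℝ)/2) = y ^ 3 := by
    rw [hy, Real.sqrt_eq_rpow, ← Real.rpow_natCast (x ^ ((1:ℝ)/2)) 3,
      ← Real.rpow_mul hx0.le]
    norm_num
  have hkey : 3 * y ^ 3 ≤ s * r := by
    rw [hx32] at hr
    have := (div_le_iff₀ hs0).mp hr
    linarith [this]
  have hr0 : 0 < r := by nlinarith
  -- r ≥ 3x, so x/r ≤ 1/3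
  have hr3x : 3 * x ≤ r := by nlinarith
  have hE2 : Real.exp (2 * x / r) ≤ 3 := by
    have h1 : 2 * x / r ≤ 1 := by
      rw [div_le_one hr0]; nlinarith
    calc Real.exp (2 * x / r) ≤ Real.exp 1 := Real.exp_le_exp.mpr h1
      _ ≤ 3 := by linarith [Real.exp_one_lt_d9]
  have hE1 : Real.exp (x / r) ≤ 3 := by
    have h1 : x / r ≤ 1 := by
      rw [div_le_one hr0]; nlinarith
    calc Real.exp (x / r) ≤ Real.exp 1 := Real.exp_le_exp.mpr h1
      _ ≤ 3 := by linarith [Real.exp_one_lt_d9]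
  have hEp2 : 0 < Real.exp (2 * x / r) := Real.exp_pos _
  have hEp1 : 0 < Real.exp (x / r) := Real.exp_pos _
  have hcube : (3 * y ^ 3) ^ 3 ≤ (s * r) ^ 3 := by
    apply pow_le_pow_left₀ (by positivity) hkey
  have hsq : (3 * y ^ 3) ^ 2 ≤ (s * r) ^ 2 := by
    apply pow_le_pow_left₀ (by positivity) hkey
  -- x^4 / r^3 ≤ ε / 27
  have h1 : x ^ 4 / r ^ 3 ≤ ε / 27 := by
    rw [div_le_div_iff₀ (by positivity) (by norm_num), hxy, hεs]
    nlinarith [sq_nonneg y, sq_nonneg s, pow_pos hs0 3, pow_pos hr0 3,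
      mul_pos (pow_pos hs0 2) (pow_pos hr0 3)]
  -- x^3 / r^2 ≤ ε / 9
  have h2 : x ^ 3 / r ^ 2 ≤ ε / 9 := by
    rw [div_le_div_iff₀ (by positivity) (by norm_num), hxy, hεs]
    nlinarith []
  have t1 : x ^ 4 / r ^ 3 * Real.exp (2 * x / r) ≤ ε / 9 := by
    calc x ^ 4 / r ^ 3 * Real.exp (2 * x / r) ≤ (ε / 27) * 3 := by
          apply mul_le_mul h1 hE2 hEp2.le (by positivity)
      _ = ε / 9 := by ring
  have t2 : 2 * x ^ 3 / (3 * r ^ 2) * Real.exp (x / r) ≤ 2 * ε / 3 := by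
    have : 2 * x ^ 3 / (3 * r ^ 2) ≤ 2 * ε / 27 := by
      rw [div_le_div_iff₀ (by positivity) (by norm_num)]
      rw [div_le_div_iff₀ (by positivity) (by norm_num)] at h2
      nlinarith [h2]
    calc 2 * x ^ 3 / (3 * r ^ 2) * Real.exp (x / r) ≤ (2 * ε / 27) * 3 := by
          apply mul_le_mul this hE1 hEp1.le (by positivity)
      _ ≤ 2 * ε / 3 := by linarith
  linarith
end
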